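/- arXiv:2502.20644 — 8 statements merged into one kernel-verified Lean document; each statement's English description precedes it below -/
import Mathlib

section
/- For all real y > 0, the function f(y) = (1 - exp(-y^2))/y satisfies f(y) < 0.6382. -/
open Real

-- cubic lower bound for exp of nonneg
lemma exp_cubic_lb (v : ℝ) (hv : 0 ≤ v) : 1 + v + v^2/2 + v^3/6 ≤ Real.exp v := by
  have h := Real.sum_le_exp_of_nonneg hv 4
  simp [Finset.sum_range_succ, Nat.factorial] at h
  nlinarith [h]

-- lower bound for exp(-q) for q in [0,1]
lemma exp_neg_lb (q : ℝ) (h0 : 0 ≤ q) (h1 : q ≤ 1) :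
    1 - q + q^2/2 - q^3/6 + q^4/24 - q^5/120 + q^6/720 - q^7/5040 - 9*q^8/322560 ≤ Real.exp (-q) := by
  have habs : |(-q)| ≤ 1 := by rw [abs_neg, abs_of_nonneg h0]; exact h1
  have h := Real.exp_bound habs (n := 8) (by norm_num)
  rw [abs_neg, abs_of_nonneg h0] at h
  have h2 := abs_sub_le_iff.mp h
  simp [Finset.sum_range_succ, Nat.factorial] at h2
  nlinarith [h2.2]

lemma seg0 (y : ℝ) (h1 : (3/5 : ℝ) ≤ y) (h2 : y ≤ (4/5 : ℝ)) :
    1 - Real.exp (-y^2) < (6382/10000 : ℝ) * y := by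
  have hq := exp_neg_lb (4/25 : ℝ) (by norm_num) (by norm_num)
  have hLq : (213035947/250000000 : ℝ) ≤ Real.exp (-(4/25 : ℝ)) := le_trans (by norm_num) hq
  have hpow : Real.exp (-(16/25 : ℝ)) = (Real.exp (-(4/25 : ℝ)))^4 := by
    rw [← Real.exp_nat_mul]; norm_num
  have hL : (527292421/1000000000 : ℝ) ≤ Real.exp (-(16/25 : ℝ)) := by
    rw [hpow]
    calc (527292421/1000000000 : ℝ) ≤ ((213035947/250000000 : ℝ))^4 := by norm_num
    _ ≤ (Real.exp (-(4/25 : ℝ)))^4 := by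
        apply pow_le_pow_left₀ (by norm_num) hLq
  have hv : (0:ℝ) ≤ (16/25 : ℝ) - y^2 := by nlinarith
  have hcube := exp_cubic_lb ((16/25 : ℝ) - y^2) hv
  have hsplit : Real.exp (-y^2) = Real.exp (-(16/25 : ℝ)) * Real.exp ((16/25 : ℝ) - y^2) := by
    rw [← Real.exp_add]; ring_nf
  have hkey : (527292421/1000000000 : ℝ) * (1 + ((16/25 : ℝ) - y^2) + ((16/25 : ℝ) - y^2)^2/2 + ((16/25 : ℝ) - y^2)^3/6) ≤ Real.exp (-y^2) := by
    rw [hsplit]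
    have he : (0:ℝ) < Real.exp ((16/25 : ℝ) - y^2) := Real.exp_pos _
    nlinarith [Real.exp_pos (-((16/25 : ℝ):ℝ))]
  have ha : (0:ℝ) ≤ y - (3/5 : ℝ) := by linarith
  have hb : (0:ℝ) ≤ (4/5 : ℝ) - y := by linarith
  nlinarith [hkey, mul_nonneg ha hb, mul_nonneg (mul_nonneg ha ha) ha, mul_nonneg (mul_nonneg ha ha) hb, sq_nonneg (y - (4/5 : ℝ)), mul_nonneg (mul_nonneg (mul_nonneg ha ha) ha) ha]


lemma seg1 (y : ℝ) (h1 : (4/5 : ℝ) ≤ y) (h2 : y ≤ (19/20 : ℝ)) :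
    1 - Real.exp (-y^2) < (6382/10000 : ℝ) * y := by
  have hq := exp_neg_lb (361/1600 : ℝ) (by norm_num) (by norm_num)
  have hLq : (798017301/1000000000 : ℝ) ≤ Real.exp (-(361/1600 : ℝ)) := le_trans (by norm_num) hq
  have hpow : Real.exp (-(361/400 : ℝ)) = (Real.exp (-(361/1600 : ℝ)))^4 := by
    rw [← Real.exp_nat_mul]; norm_num
  have hL : (202777251/500000000 : ℝ) ≤ Real.exp (-(361/400 : ℝ)) := by
    rw [hpow]
    calc (202777251/500000000 : ℝ) ≤ ((798017301/1000000000 : ℝ))^4 := by norm_num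
    _ ≤ (Real.exp (-(361/1600 : ℝ)))^4 := by
        apply pow_le_pow_left₀ (by norm_num) hLq
  have hv : (0:ℝ) ≤ (361/400 : ℝ) - y^2 := by nlinarith
  have hcube := exp_cubic_lb ((361/400 : ℝ) - y^2) hv
  have hsplit : Real.exp (-y^2) = Real.exp (-(361/400 : ℝ)) * Real.exp ((361/400 : ℝ) - y^2) := by
    rw [← Real.exp_add]; ring_nf
  have hkey : (202777251/500000000 : ℝ) * (1 + ((361/400 : ℝ) - y^2) + ((361/400 : ℝ) - y^2)^2/2 + ((361/400 : ℝ) - y^2)^3/6) ≤ Real.exp (-y^2) := by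
    rw [hsplit]
    have he : (0:ℝ) < Real.exp ((361/400 : ℝ) - y^2) := Real.exp_pos _
    nlinarith [Real.exp_pos (-((361/400 : ℝ):ℝ))]
  have ha : (0:ℝ) ≤ y - (4/5 : ℝ) := by linarith
  have hb : (0:ℝ) ≤ (19/20 : ℝ) - y := by linarith
  nlinarith [hkey, mul_nonneg ha hb, mul_nonneg (mul_nonneg ha ha) ha, mul_nonneg (mul_nonneg ha ha) hb, sq_nonneg (y - (19/20 : ℝ)), mul_nonneg (mul_nonneg (mul_nonneg ha ha) ha) ha]


lemma seg2 (y : ℝ) (h1 : (19/20 : ℝ) ≤ y) (h2 : y ≤ (21/20 : ℝ)) :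
    1 - Real.exp (-y^2) < (6382/10000 : ℝ) * y := by
  have hq := exp_neg_lb (441/1600 : ℝ) (by norm_num) (by norm_num)
  have hLq : (759097537/1000000000 : ℝ) ≤ Real.exp (-(441/1600 : ℝ)) := le_trans (by norm_num) hq
  have hpow : Real.exp (-(441/400 : ℝ)) = (Real.exp (-(441/1600 : ℝ)))^4 := by
    rw [← Real.exp_nat_mul]; norm_num
  have hL : (332039941/1000000000 : ℝ) ≤ Real.exp (-(441/400 : ℝ)) := by
    rw [hpow]
    calc (332039941/1000000000 : ℝ) ≤ ((759097537/1000000000 : ℝ))^4 := by norm_num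
    _ ≤ (Real.exp (-(441/1600 : ℝ)))^4 := by
        apply pow_le_pow_left₀ (by norm_num) hLq
  have hv : (0:ℝ) ≤ (441/400 : ℝ) - y^2 := by nlinarith
  have hcube := exp_cubic_lb ((441/400 : ℝ) - y^2) hv
  have hsplit : Real.exp (-y^2) = Real.exp (-(441/400 : ℝ)) * Real.exp ((441/400 : ℝ) - y^2) := by
    rw [← Real.exp_add]; ring_nf
  have hkey : (332039941/1000000000 : ℝ) * (1 + ((441/400 : ℝ) - y^2) + ((441/400 : ℝ) - y^2)^2/2 + ((441/400 : ℝ) - y^2)^3/6) ≤ Real.exp (-y^2) := by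
    rw [hsplit]
    have he : (0:ℝ) < Real.exp ((441/400 : ℝ) - y^2) := Real.exp_pos _
    nlinarith [Real.exp_pos (-((441/400 : ℝ):ℝ))]
  have ha : (0:ℝ) ≤ y - (19/20 : ℝ) := by linarith
  have hb : (0:ℝ) ≤ (21/20 : ℝ) - y := by linarith
  nlinarith [hkey, mul_nonneg ha hb, mul_nonneg (mul_nonneg ha ha) ha, mul_nonneg (mul_nonneg ha ha) hb, sq_nonneg (y - (21/20 : ℝ)), mul_nonneg (mul_nonneg (mul_nonneg ha ha) ha) ha]


lemma seg3 (y : ℝ) (h1 : (21/20 : ℝ) ≤ y) (h2 : y ≤ (9/8 : ℝ)) :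
    1 - Real.exp (-y^2) < (6382/10000 : ℝ) * y := by
  have hq := exp_neg_lb (81/256 : ℝ) (by norm_num) (by norm_num)
  have hLq : (182190831/250000000 : ℝ) ≤ Real.exp (-(81/256 : ℝ)) := le_trans (by norm_num) hq
  have hpow : Real.exp (-(81/64 : ℝ)) = (Real.exp (-(81/256 : ℝ)))^4 := by
    rw [← Real.exp_nat_mul]; norm_num
  have hL : (141031471/500000000 : ℝ) ≤ Real.exp (-(81/64 : ℝ)) := by
    rw [hpow]
    calc (141031471/500000000 : ℝ) ≤ ((182190831/250000000 : ℝ))^4 := by norm_num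
    _ ≤ (Real.exp (-(81/256 : ℝ)))^4 := by
        apply pow_le_pow_left₀ (by norm_num) hLq
  have hv : (0:ℝ) ≤ (81/64 : ℝ) - y^2 := by nlinarith
  have hcube := exp_cubic_lb ((81/64 : ℝ) - y^2) hv
  have hsplit : Real.exp (-y^2) = Real.exp (-(81/64 : ℝ)) * Real.exp ((81/64 : ℝ) - y^2) := by
    rw [← Real.exp_add]; ring_nf
  have hkey : (141031471/500000000 : ℝ) * (1 + ((81/64 : ℝ) - y^2) + ((81/64 : ℝ) - y^2)^2/2 + ((81/64 : ℝ) - y^2)^3/6) ≤ Real.exp (-y^2) := by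
    rw [hsplit]
    have he : (0:ℝ) < Real.exp ((81/64 : ℝ) - y^2) := Real.exp_pos _
    nlinarith [Real.exp_pos (-((81/64 : ℝ):ℝ))]
  have ha : (0:ℝ) ≤ y - (21/20 : ℝ) := by linarith
  have hb : (0:ℝ) ≤ (9/8 : ℝ) - y := by linarith
  nlinarith [hkey, mul_nonneg ha hb, mul_nonneg (mul_nonneg ha ha) ha, mul_nonneg (mul_nonneg ha ha) hb, sq_nonneg (y - (28/25 : ℝ)), mul_nonneg (mul_nonneg (mul_nonneg ha ha) ha) ha]


lemma seg4 (y : ℝ) (h1 : (9/8 : ℝ) ≤ y) (h2 : y ≤ (6/5 : ℝ)) :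
    1 - Real.exp (-y^2) < (6382/10000 : ℝ) * y := by
  have hq := exp_neg_lb (9/25 : ℝ) (by norm_num) (by norm_num)
  have hLq : (697676311/1000000000 : ℝ) ≤ Real.exp (-(9/25 : ℝ)) := le_trans (by norm_num) hq
  have hpow : Real.exp (-(36/25 : ℝ)) = (Real.exp (-(9/25 : ℝ)))^4 := by
    rw [← Real.exp_nat_mul]; norm_num
  have hL : (118463869/500000000 : ℝ) ≤ Real.exp (-(36/25 : ℝ)) := by
    rw [hpow]
    calc (118463869/500000000 : ℝ) ≤ ((697676311/1000000000 : ℝ))^4 := by norm_num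
    _ ≤ (Real.exp (-(9/25 : ℝ)))^4 := by
        apply pow_le_pow_left₀ (by norm_num) hLq
  have hv : (0:ℝ) ≤ (36/25 : ℝ) - y^2 := by nlinarith
  have hcube := exp_cubic_lb ((36/25 : ℝ) - y^2) hv
  have hsplit : Real.exp (-y^2) = Real.exp (-(36/25 : ℝ)) * Real.exp ((36/25 : ℝ) - y^2) := by
    rw [← Real.exp_add]; ring_nf
  have hkey : (118463869/500000000 : ℝ) * (1 + ((36/25 : ℝ) - y^2) + ((36/25 : ℝ) - y^2)^2/2 + ((36/25 : ℝ) - y^2)^3/6) ≤ Real.exp (-y^2) := by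
    rw [hsplit]
    have he : (0:ℝ) < Real.exp ((36/25 : ℝ) - y^2) := Real.exp_pos _
    nlinarith [Real.exp_pos (-((36/25 : ℝ):ℝ))]
  have ha : (0:ℝ) ≤ y - (9/8 : ℝ) := by linarith
  have hb : (0:ℝ) ≤ (6/5 : ℝ) - y := by linarith
  nlinarith [hkey, mul_nonneg ha hb, mul_nonneg (mul_nonneg ha ha) ha, mul_nonneg (mul_nonneg ha ha) hb, sq_nonneg (y - (9/8 : ℝ)), mul_nonneg (mul_nonneg (mul_nonneg ha ha) ha) ha]


lemma seg5 (y : ℝ) (h1 : (6/5 : ℝ) ≤ y) (h2 : y ≤ (13/10 : ℝ)) :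
    1 - Real.exp (-y^2) < (6382/10000 : ℝ) * y := by
  have hq := exp_neg_lb (169/400 : ℝ) (by norm_num) (by norm_num)
  have hLq : (655406201/1000000000 : ℝ) ≤ Real.exp (-(169/400 : ℝ)) := le_trans (by norm_num) hq
  have hpow : Real.exp (-(169/100 : ℝ)) = (Real.exp (-(169/400 : ℝ)))^4 := by
    rw [← Real.exp_nat_mul]; norm_num
  have hL : (184519463/1000000000 : ℝ) ≤ Real.exp (-(169/100 : ℝ)) := by
    rw [hpow]
    calc (184519463/1000000000 : ℝ) ≤ ((655406201/1000000000 : ℝ))^4 := by norm_num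
    _ ≤ (Real.exp (-(169/400 : ℝ)))^4 := by
        apply pow_le_pow_left₀ (by norm_num) hLq
  have hv : (0:ℝ) ≤ (169/100 : ℝ) - y^2 := by nlinarith
  have hcube := exp_cubic_lb ((169/100 : ℝ) - y^2) hv
  have hsplit : Real.exp (-y^2) = Real.exp (-(169/100 : ℝ)) * Real.exp ((169/100 : ℝ) - y^2) := by
    rw [← Real.exp_add]; ring_nf
  have hkey : (184519463/1000000000 : ℝ) * (1 + ((169/100 : ℝ) - y^2) + ((169/100 : ℝ) - y^2)^2/2 + ((169/100 : ℝ) - y^2)^3/6) ≤ Real.exp (-y^2) := by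
    rw [hsplit]
    have he : (0:ℝ) < Real.exp ((169/100 : ℝ) - y^2) := Real.exp_pos _
    nlinarith [Real.exp_pos (-((169/100 : ℝ):ℝ))]
  have ha : (0:ℝ) ≤ y - (6/5 : ℝ) := by linarith
  have hb : (0:ℝ) ≤ (13/10 : ℝ) - y := by linarith
  nlinarith [hkey, mul_nonneg ha hb, mul_nonneg (mul_nonneg ha ha) ha, mul_nonneg (mul_nonneg ha ha) hb, sq_nonneg (y - (6/5 : ℝ)), mul_nonneg (mul_nonneg (mul_nonneg ha ha) ha) ha]


lemma seg6 (y : ℝ) (h1 : (13/10 : ℝ) ≤ y) (h2 : y ≤ (29/20 : ℝ)) :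
    1 - Real.exp (-y^2) < (6382/10000 : ℝ) * y := by
  have hq := exp_neg_lb (841/1600 : ℝ) (by norm_num) (by norm_num)
  have hLq : (295592729/500000000 : ℝ) ≤ Real.exp (-(841/1600 : ℝ)) := le_trans (by norm_num) hq
  have hpow : Real.exp (-(841/400 : ℝ)) = (Real.exp (-(841/1600 : ℝ)))^4 := by
    rw [← Real.exp_nat_mul]; norm_num
  have hL : (122150421/1000000000 : ℝ) ≤ Real.exp (-(841/400 : ℝ)) := by
    rw [hpow]
    calc (122150421/1000000000 : ℝ) ≤ ((295592729/500000000 : ℝ))^4 := by norm_num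
    _ ≤ (Real.exp (-(841/1600 : ℝ)))^4 := by
        apply pow_le_pow_left₀ (by norm_num) hLq
  have hv : (0:ℝ) ≤ (841/400 : ℝ) - y^2 := by nlinarith
  have hcube := exp_cubic_lb ((841/400 : ℝ) - y^2) hv
  have hsplit : Real.exp (-y^2) = Real.exp (-(841/400 : ℝ)) * Real.exp ((841/400 : ℝ) - y^2) := by
    rw [← Real.exp_add]; ring_nf
  have hkey : (122150421/1000000000 : ℝ) * (1 + ((841/400 : ℝ) - y^2) + ((841/400 : ℝ) - y^2)^2/2 + ((841/400 : ℝ) - y^2)^3/6) ≤ Real.exp (-y^2) := by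
    rw [hsplit]
    have he : (0:ℝ) < Real.exp ((841/400 : ℝ) - y^2) := Real.exp_pos _
    nlinarith [Real.exp_pos (-((841/400 : ℝ):ℝ))]
  have ha : (0:ℝ) ≤ y - (13/10 : ℝ) := by linarith
  have hb : (0:ℝ) ≤ (29/20 : ℝ) - y := by linarith
  nlinarith [hkey, mul_nonneg ha hb, mul_nonneg (mul_nonneg ha ha) ha, mul_nonneg (mul_nonneg ha ha) hb, sq_nonneg (y - (13/10 : ℝ)), mul_nonneg (mul_nonneg (mul_nonneg ha ha) ha) ha]


lemma seg7 (y : ℝ) (h1 : (29/20 : ℝ) ≤ y) (h2 : y ≤ (11/7 : ℝ)) :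
    1 - Real.exp (-y^2) < (6382/10000 : ℝ) * y := by
  have hq := exp_neg_lb (121/196 : ℝ) (by norm_num) (by norm_num)
  have hLq : (539372453/1000000000 : ℝ) ≤ Real.exp (-(121/196 : ℝ)) := le_trans (by norm_num) hq
  have hpow : Real.exp (-(121/49 : ℝ)) = (Real.exp (-(121/196 : ℝ)))^4 := by
    rw [← Real.exp_nat_mul]; norm_num
  have hL : (5289749/62500000 : ℝ) ≤ Real.exp (-(121/49 : ℝ)) := by
    rw [hpow]
    calc (5289749/62500000 : ℝ) ≤ ((539372453/1000000000 : ℝ))^4 := by norm_num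
    _ ≤ (Real.exp (-(121/196 : ℝ)))^4 := by
        apply pow_le_pow_left₀ (by norm_num) hLq
  have hv : (0:ℝ) ≤ (121/49 : ℝ) - y^2 := by nlinarith
  have hcube := exp_cubic_lb ((121/49 : ℝ) - y^2) hv
  have hsplit : Real.exp (-y^2) = Real.exp (-(121/49 : ℝ)) * Real.exp ((121/49 : ℝ) - y^2) := by
    rw [← Real.exp_add]; ring_nf
  have hkey : (5289749/62500000 : ℝ) * (1 + ((121/49 : ℝ) - y^2) + ((121/49 : ℝ) - y^2)^2/2 + ((121/49 : ℝ) - y^2)^3/6) ≤ Real.exp (-y^2) := by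
    rw [hsplit]
    have he : (0:ℝ) < Real.exp ((121/49 : ℝ) - y^2) := Real.exp_pos _
    nlinarith [Real.exp_pos (-((121/49 : ℝ):ℝ))]
  have ha : (0:ℝ) ≤ y - (29/20 : ℝ) := by linarith
  have hb : (0:ℝ) ≤ (11/7 : ℝ) - y := by linarith
  nlinarith [hkey, mul_nonneg ha hb, mul_nonneg (mul_nonneg ha ha) ha, mul_nonneg (mul_nonneg ha ha) hb, sq_nonneg (y - (29/20 : ℝ)), mul_nonneg (mul_nonneg (mul_nonneg ha ha) ha) ha]
lemma seg_small (y : ℝ) (h0 : 0 < y) (h2 : y ≤ (3/5 : ℝ)) :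
    1 - Real.exp (-y^2) < (6382/10000 : ℝ) * y := by
  have h := Real.add_one_le_exp (-y^2)
  nlinarith

lemma seg_big (y : ℝ) (h1 : (11/7 : ℝ) ≤ y) :
    1 - Real.exp (-y^2) < (6382/10000 : ℝ) * y := by
  have h := Real.exp_pos (-y^2)
  nlinarith

theorem stmt_0 (y : ℝ) (hy : 0 < y) :
    (1 - Real.exp (-y ^ 2)) / y < 0.6382 := by
  have key : 1 - Real.exp (-y^2) < (6382/10000 : ℝ) * y := by
    rcases le_or_gt y (3/5) with h | h
    · exact seg_small y hy h
    rcases le_or_gt y (4/5) with h2 | h2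
    · exact seg0 y h.le h2
    rcases le_or_gt y (19/20) with h3 | h3
    · exact seg1 y h2.le h3
    rcases le_or_gt y (21/20) with h4 | h4
    · exact seg2 y h3.le h4
    rcases le_or_gt y (9/8) with h5 | h5
    · exact seg3 y h4.le h5
    rcases le_or_gt y (6/5) with h6 | h6
    · exact seg4 y h5.le h6
    rcases le_or_gt y (13/10) with h7 | h7
    · exact seg5 y h6.le h7
    rcases le_or_gt y (29/20) with h8 | h8
    · exact seg6 y h7.le h8
    rcases le_or_gt y (11/7) with h9 | h9
    · exact seg7 y h8.le h9
    · exact seg_big y h9.le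
  rw [div_lt_iff₀ hy]
  calc 1 - Real.exp (-y^2) < (6382/10000 : ℝ) * y := key
  _ = 0.6382 * y := by norm_num
end

section
/- For all x with 0 ≤ x ≤ 0.5, g(x) ≥ 0.49 μ x², where g(x) = μ(x·ln(√(x²+1) + x) − √(x²+1) + 1) and μ > 0. -/
/-!
Writing `F x = x * arsinh x - √(1 + x²) + 1` (note `log (√(x² + 1) + x) = arsinh x`), we have
`F 0 = 0`, `F' = arsinh` and `arsinh' = (√(1 + x²))⁻¹`. The elementary bound
`(√(1 + t²))⁻¹ ≥ 1 - t²/2 + t⁴/4` on `[0, 1/2]` integrates twice to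
`F x ≥ x²/2 - x⁴/24 + x⁶/120`, and this polynomial is at least `0.49 x²` for `x ≤ 1/2`.
-/

open Real Set

lemma le_of_hasDerivAt_le {f g f' g' : ℝ → ℝ} {a b : ℝ}
    (hf : ∀ x, HasDerivAt f (f' x) x) (hg : ∀ x, HasDerivAt g (g' x) x) (ha : f a ≤ g a)
    (hderiv : ∀ x ∈ Ico a b, f' x ≤ g' x) : ∀ x ∈ Icc a b, f x ≤ g x :=
  fun _ hx => image_le_of_deriv_right_le_deriv_boundary
    (fun x _ => (hf x).continuousAt.continuousWithinAt) (fun x _ => (hf x).hasDerivWithinAt) ha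
    (fun x _ => (hg x).continuousAt.continuousWithinAt) (fun x _ => (hg x).hasDerivWithinAt)
    hderiv hx

lemma hasDerivAt_sqrt_one_add_sq (x : ℝ) :
    HasDerivAt (fun t => √(1 + t ^ 2)) (x * (√(1 + x ^ 2))⁻¹) x := by
  have h := ((hasDerivAt_pow 2 x).const_add 1).sqrt (by positivity)
  refine h.congr_deriv ?_
  field_simp
  norm_num

lemma hasDerivAt_mul_arsinh_sub_sqrt (x : ℝ) :
    HasDerivAt (fun t => t * arsinh t - √(1 + t ^ 2) + 1) (arsinh x) x := by
  have h := (((hasDerivAt_id x).mul (hasDerivAt_arsinh x)).sub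
    (hasDerivAt_sqrt_one_add_sq x)).add_const 1
  exact h.congr_deriv (by simp)

lemma one_sub_add_le_inv_sqrt_one_add_sq {t : ℝ} (hs : t ^ 2 ≤ 1 / 4) :
    1 - t ^ 2 / 2 + t ^ 4 / 4 ≤ (√(1 + t ^ 2))⁻¹ := by
  have hp : 0 ≤ 1 - t ^ 2 / 2 + t ^ 4 / 4 := by nlinarith
  have hsq : (1 - t ^ 2 / 2 + t ^ 4 / 4) ^ 2 * (1 + t ^ 2) ≤ 1 := by
    have hcubic : 0 ≤ 1 / 4 - t ^ 2 / 2 + 3 * t ^ 4 / 16 - t ^ 6 / 16 := by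
      nlinarith [pow_le_pow_left₀ (sq_nonneg t) hs 3]
    nlinarith [mul_nonneg (pow_nonneg (sq_nonneg t) 2) hcubic]
  rw [← one_div, le_div_iff₀ (by positivity)]
  calc (1 - t ^ 2 / 2 + t ^ 4 / 4) * √(1 + t ^ 2)
      = √((1 - t ^ 2 / 2 + t ^ 4 / 4) ^ 2 * (1 + t ^ 2)) := by
        rw [sqrt_mul (sq_nonneg _), sqrt_sq hp]
    _ ≤ 1 := sqrt_le_one.mpr hsq

lemma sub_add_le_arsinh {x : ℝ} (hx : 0 ≤ x) (hx' : x ≤ 1 / 2) :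
    x - x ^ 3 / 6 + x ^ 5 / 20 ≤ arsinh x := by
  have hpoly (t : ℝ) :
      HasDerivAt (fun t => t - t ^ 3 / 6 + t ^ 5 / 20) (1 - t ^ 2 / 2 + t ^ 4 / 4) t := by
    have h := ((hasDerivAt_id t).sub ((hasDerivAt_pow 3 t).div_const 6)).add
      ((hasDerivAt_pow 5 t).div_const 20)
    exact h.congr_deriv (by simp; ring)
  refine le_of_hasDerivAt_le hpoly hasDerivAt_arsinh (by simp) (fun t ht => ?_) x ⟨hx, hx'⟩
  exact one_sub_add_le_inv_sqrt_one_add_sq (by nlinarith [ht.1, ht.2])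

lemma poly_le_mul_arsinh_sub_sqrt {x : ℝ} (hx : 0 ≤ x) (hx' : x ≤ 1 / 2) :
    x ^ 2 / 2 - x ^ 4 / 24 + x ^ 6 / 120 ≤ x * arsinh x - √(1 + x ^ 2) + 1 := by
  have hpoly (t : ℝ) : HasDerivAt (fun t => t ^ 2 / 2 - t ^ 4 / 24 + t ^ 6 / 120)
      (t - t ^ 3 / 6 + t ^ 5 / 20) t := by
    have h := (((hasDerivAt_pow 2 t).div_const 2).sub ((hasDerivAt_pow 4 t).div_const 24)).add
      ((hasDerivAt_pow 6 t).div_const 120)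
    exact h.congr_deriv (by simp; ring)
  refine le_of_hasDerivAt_le hpoly hasDerivAt_mul_arsinh_sub_sqrt (by simp)
    (fun t ht => ?_) x ⟨hx, hx'⟩
  exact sub_add_le_arsinh ht.1 (by linarith [ht.2])

theorem stmt_3 (μ : ℝ) (hμ : 0 < μ)
    (g : ℝ → ℝ)
    (hg : ∀ x, g x = μ * (x * Real.log (Real.sqrt (x ^ 2 + 1) + x) - Real.sqrt (x ^ 2 + 1) + 1)) :
    ∀ x : ℝ, 0 ≤ x → x ≤ 0.5 → 0.49 * μ * x ^ 2 ≤ g x := by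
  intro x hx hx'
  replace hx' : x ≤ 1 / 2 := by norm_num at hx' ⊢; exact hx'
  have hpoly : 0.49 * x ^ 2 ≤ x ^ 2 / 2 - x ^ 4 / 24 + x ^ 6 / 120 := by
    have hs : x ^ 2 ≤ 1 / 4 := by nlinarith
    nlinarith [mul_nonneg (sq_nonneg x) (mul_nonneg (sub_nonneg.2 hs) (sub_nonneg.2 hs))]
  have hF := poly_le_mul_arsinh_sub_sqrt hx hx'
  have harsinh : log (√(1 + x ^ 2) + x) = arsinh x := by rw [arsinh, add_comm]
  rw [hg, add_comm (x ^ 2), harsinh]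
  linarith [mul_le_mul_of_nonneg_left (hpoly.trans hF) hμ.le]
end

section
/- Let μ ≥ 0 and n ∈ ℕ with n > μ²/4. Define d : Fin n type sequence by d_n = 2n and d_j = 2j + μ²/d_{j+1} for j = n−1 down to 1. Then for all 1 ≤ j ≤ n−1, 0 ≤ d_{j+1} − d_j ≤ 2. -/
/-!
Writing `e_j = d_{j+1} - d_j`, the recursion gives `e_{n-1} = 2 - μ²/(2n)` and
`e_j = 2 - μ² e_{j+1} / (d_{j+1} d_{j+2})`. Since `d_{j+1} d_{j+2} = 2(j+1) d_{j+2} + μ² ≥ μ²`,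
the map `e ↦ 2 - μ² e / (d_{j+1} d_{j+2})` sends `[0, 2]` into itself, and `μ² ≤ 4n` puts
`e_{n-1}` in `[0, 2]`; downward induction on `j` finishes.
-/

open Set

lemma two_mul_sub_two_mul_sub_one_add_div_mem_Icc {c s : ℝ} (hc : 0 ≤ c) (hs : 0 < s)
    (hcs : c ≤ 4 * s) : 2 * s - (2 * (s - 1) + c / (2 * s)) ∈ Icc (0 : ℝ) 2 := by
  have h_le : c / (2 * s) ≤ 2 := by rw [div_le_iff₀ (by positivity)]; linarith
  have h_nonneg : 0 ≤ c / (2 * s) := by positivity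
  constructor <;> linarith

lemma sub_mem_Icc_of_sub_mem_Icc_of_recursion {c t x y z : ℝ} (hc : 0 ≤ c) (ht : 0 ≤ t)
    (hy : 0 < y) (hz : 0 < z) (hx : x = 2 * t + c / y) (hyz : y = 2 * (t + 1) + c / z)
    (h : z - y ∈ Icc (0 : ℝ) 2) : y - x ∈ Icc (0 : ℝ) 2 := by
  obtain ⟨h_nonneg, h_le⟩ := h
  have hyz_pos : 0 < y * z := mul_pos hy hz
  have hc_le : c ≤ y * z := by
    have : y * z = 2 * (t + 1) * z + c := by rw [hyz]; field_simp
    nlinarith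
  have h_diff : y - x = 2 - c * (z - y) / (y * z) := by
    rw [hx]; nth_rewrite 1 [hyz]; field_simp; ring
  have h_corr_nonneg : 0 ≤ c * (z - y) / (y * z) := by positivity
  have h_corr_le : c * (z - y) / (y * z) ≤ 2 := by
    rw [div_le_iff₀ hyz_pos]; nlinarith
  rw [h_diff]
  constructor <;> linarith

theorem stmt_5_general (μ : ℝ) (n : ℕ) (hn : μ ^ 2 / 4 < (n : ℝ))
    (d : ℕ → ℝ)
    (hdn : d n = 2 * n)
    (hrec : ∀ j : ℕ, 1 ≤ j → j < n → d j = 2 * j + μ ^ 2 / d (j + 1))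
    (hpos : ∀ j : ℕ, 1 ≤ j → j ≤ n → 0 < d j) :
    ∀ j : ℕ, 1 ≤ j → j ≤ n - 1 → 0 ≤ d (j + 1) - d j ∧ d (j + 1) - d j ≤ 2 := by
  intro j hj hjn
  have hn_pos : (0 : ℝ) < n := lt_of_le_of_lt (by positivity) hn
  have h_last : d n - d (n - 1) ∈ Icc (0 : ℝ) 2 := by
    have hn1 : 1 ≤ n := by exact_mod_cast hn_pos
    rw [hdn, hrec (n - 1) (by omega) (by omega), Nat.sub_add_cancel hn1, hdn,
      Nat.cast_sub hn1, Nat.cast_one]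
    exact two_mul_sub_two_mul_sub_one_add_div_mem_Icc (sq_nonneg μ) hn_pos (by linarith)
  refine Nat.decreasingInduction' (P := fun k ↦ d (k + 1) - d k ∈ Icc (0 : ℝ) 2)
    (fun k hk hjk ih ↦ ?_) hjn (by rwa [Nat.sub_add_cancel (by omega)])
  have h_next := hrec (k + 1) (by omega) (by omega)
  push_cast at h_next
  exact sub_mem_Icc_of_sub_mem_Icc_of_recursion (sq_nonneg μ) k.cast_nonneg
    (hpos _ (by omega) (by omega)) (hpos _ (by omega) (by omega))
    (hrec k (by omega) (by omega)) h_next ih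

theorem stmt_5 (μ : ℝ) (hμ : 0 ≤ μ) (n : ℕ) (hn : μ ^ 2 / 4 < (n : ℝ))
    (d : ℕ → ℝ)
    (hdn : d n = 2 * n)
    (hrec : ∀ j : ℕ, 1 ≤ j → j < n → d j = 2 * j + μ ^ 2 / d (j + 1))
    (hpos : ∀ j : ℕ, 1 ≤ j → j ≤ n → 0 < d j) :
    ∀ j : ℕ, 1 ≤ j → j ≤ n - 1 → 0 ≤ d (j + 1) - d j ∧ d (j + 1) - d j ≤ 2 :=
  stmt_5_general μ n hn d hdn hrec hpos
end

section
/- Let μ ≥ 0 and n ∈ ℕ with n > μ²/4. With the backwards recursion d_n = 2n, d_j = 2j + μ²/d_{j+1}, for all 1 ≤ j ≤ n−1 one has j + √(j² + μ²) ≤ d_{j+1} ≤ (j+1) + √((j+1)² + μ²). -/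
lemma aux_div_sqrt (μ a : ℝ) (ha : 0 < a) :
    μ ^ 2 / (a + Real.sqrt (a ^ 2 + μ ^ 2)) = Real.sqrt (a ^ 2 + μ ^ 2) - a := by
  have hs : Real.sqrt (a ^ 2 + μ ^ 2) ^ 2 = a ^ 2 + μ ^ 2 :=
    Real.sq_sqrt (by positivity)
  have hnn := Real.sqrt_nonneg (a ^ 2 + μ ^ 2)
  have hpos : 0 < a + Real.sqrt (a ^ 2 + μ ^ 2) := by linarith
  rw [div_eq_iff hpos.ne']
  nlinarith [hs]

theorem stmt_6 (μ : ℝ) (hμ : 0 ≤ μ) (n : ℕ) (hn : μ ^ 2 / 4 < (n : ℝ))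
    (d : ℕ → ℝ)
    (hdn : d n = 2 * n)
    (hrec : ∀ j : ℕ, 1 ≤ j → j < n → d j = 2 * j + μ ^ 2 / d (j + 1))
    (hpos : ∀ j : ℕ, 1 ≤ j → j ≤ n → 0 < d j)
    (hgap : ∀ j : ℕ, 1 ≤ j → j ≤ n - 1 → 0 ≤ d (j + 1) - d j ∧ d (j + 1) - d j ≤ 2) :
    ∀ j : ℕ, 1 ≤ j → j ≤ n - 1 →
      (j : ℝ) + Real.sqrt ((j : ℝ) ^ 2 + μ ^ 2) ≤ d (j + 1) ∧
      d (j + 1) ≤ ((j : ℝ) + 1) + Real.sqrt (((j : ℝ) + 1) ^ 2 + μ ^ 2) := by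
  have key : ∀ m : ℕ, ∀ j : ℕ, 1 ≤ j → j ≤ n - 1 → n - 1 - j ≤ m →
      (j : ℝ) + Real.sqrt ((j : ℝ) ^ 2 + μ ^ 2) ≤ d (j + 1) ∧
      d (j + 1) ≤ ((j : ℝ) + 1) + Real.sqrt (((j : ℝ) + 1) ^ 2 + μ ^ 2) := by
    intro m
    induction m with
    | zero =>
      intro j hj1 hj2 hj3
      have hjn : j + 1 = n := by omega
      have hc : (j : ℝ) + 1 = (n : ℝ) := by exact_mod_cast congrArg (Nat.cast (R := ℝ)) hjn
      rw [hjn, hdn]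
      constructor
      · have h1 : (j : ℝ) ^ 2 + μ ^ 2 ≤ ((n : ℝ) + 1) ^ 2 := by nlinarith
        have h2 : Real.sqrt ((j : ℝ) ^ 2 + μ ^ 2) ≤ (n : ℝ) + 1 := by
          calc Real.sqrt ((j : ℝ) ^ 2 + μ ^ 2) ≤ Real.sqrt (((n : ℝ) + 1) ^ 2) :=
                Real.sqrt_le_sqrt h1
            _ = (n : ℝ) + 1 := Real.sqrt_sq (by positivity)
        linarith
      · rw [hc]
        have h2 : (n : ℝ) ≤ Real.sqrt ((n : ℝ) ^ 2 + μ ^ 2) := by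
          calc (n : ℝ) = Real.sqrt ((n : ℝ) ^ 2) := (Real.sqrt_sq (by positivity)).symm
            _ ≤ Real.sqrt ((n : ℝ) ^ 2 + μ ^ 2) := Real.sqrt_le_sqrt (by nlinarith)
        linarith
    | succ m ih =>
      intro j hj1 hj2 hj3
      by_cases hcase : n - 1 - j ≤ m
      · exact ih j hj1 hj2 hcase
      · have hjlt : j + 1 ≤ n - 1 := by omega
        have hIH := ih (j + 1) (by omega) hjlt (by omega)
        push_cast at hIH
        obtain ⟨hlo, hhi⟩ := hIH
        have hdpos : 0 < d (j + 1 + 1) := hpos (j + 2) (by omega) (by omega)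
        have hrecj : d (j + 1) = 2 * ((j : ℝ) + 1) + μ ^ 2 / d (j + 1 + 1) := by
          have := hrec (j + 1) (by omega) (by omega)
          push_cast at this
          exact this
        set A : ℝ := (j : ℝ) + 1 with hA
        set B : ℝ := (j : ℝ) + 1 + 1 with hB
        have hApos : 0 < A := by positivity
        have hBpos : 0 < B := by positivity
        have s1nn := Real.sqrt_nonneg (A ^ 2 + μ ^ 2)
        have s2nn := Real.sqrt_nonneg (B ^ 2 + μ ^ 2)
        have eq1 := aux_div_sqrt μ A hApos
        have eq2 := aux_div_sqrt μ B hBpos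
        constructor
        · -- lower bound
          have hdiv : μ ^ 2 / (B + Real.sqrt (B ^ 2 + μ ^ 2)) ≤ μ ^ 2 / d (j + 1 + 1) := by
            gcongr
          have hs2 : Real.sqrt ((j : ℝ) ^ 2 + μ ^ 2) ≤ Real.sqrt (B ^ 2 + μ ^ 2) :=
            Real.sqrt_le_sqrt (by nlinarith)
          rw [hrecj]
          rw [eq2] at hdiv
          linarith
        · -- upper bound
          have hdiv : μ ^ 2 / d (j + 1 + 1) ≤ μ ^ 2 / (A + Real.sqrt (A ^ 2 + μ ^ 2)) := by
            gcongr
          rw [hrecj]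
          rw [eq1] at hdiv
          linarith
  intro j hj1 hj2
  exact key (n - 1 - j) j hj1 hj2 le_rfl
end

section
/- Let μ > 0 and n ∈ ℕ, and let T(n) be the n×n tridiagonal matrix with diagonal entries T_{jj} = 2j, subdiagonal entries μ, and superdiagonal entries −μ. Then T(n) is invertible and its inverse is given by (T(n)^{-1})_{ij} = μ^{j−i} (d_{j+1}⋯d_n)/(δ_i⋯δ_n) for i ≤ j and (T(n)^{-1})_{ij} = (−1)^{i+j} μ^{i−j} (d_{i+1}⋯d_n)/(δ_j⋯δ_n) for i > j, where δ_1 = 2, δ_j = 2j + μ²/δ_{j−1}, d_n = 2n, d_j = 2j + μ²/d_{j+1}. -/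
/-!
The `δ` are the pivots of Gaussian elimination from the top and the `d` those of elimination
from the bottom, so `θ k = δ₁ ⋯ δ_k` and `φ k = d_{k+1} ⋯ d_n` are the leading and trailing
principal minors of `T(n)`, and both satisfy the three-term recurrence of the matrix. Usmani's
formula then gives a right inverse: off the diagonal each row sum is a multiple of one of the
recurrences, and on the diagonal it is the expansion `θ_n = θ_m φ_m - βγ θ_{m-1} φ_{m+1}`, whose
right-hand side does not depend on `m`. Cancelling `θ_i` against `θ_n` gives the stated quotients.
-/

open Finset

theorem prod_Ioc_eq_mul_prod_Ioc_succ {M : Type*} [CommMonoid M] (f : ℕ → M) {a b : ℕ}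
    (h : a < b) : ∏ l ∈ Ioc a b, f l = f (a + 1) * ∏ l ∈ Ioc (a + 1) b, f l := by
  rw [← prod_Ioc_consecutive f (Nat.le_succ a) h, Nat.Ioc_succ_singleton, prod_singleton]

section Tridiagonal

variable {R : Type*} [NonUnitalNonAssocSemiring R]

/-- Rows and columns are numbered from `0`, so `α k` is the diagonal entry of row `k`. -/
def tridiagonal (n : ℕ) (α : ℕ → R) (β γ : R) : Matrix (Fin n) (Fin n) R :=
  Matrix.of fun i j =>
    if (i : ℕ) = j then α j else if (i : ℕ) = j + 1 then β else if (j : ℕ) = i + 1 then γ else 0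

def tridiagonalApply (n : ℕ) (α : ℕ → R) (β γ : R) (x : ℕ → R) (a : ℕ) : R :=
  (if 1 ≤ a then β * x (a - 1) else 0) + α a * x a + (if a + 1 < n then γ * x (a + 1) else 0)

theorem sum_tridiagonal_mul {n : ℕ} (α : ℕ → R) (β γ : R) (i : Fin n) (x : ℕ → R) :
    ∑ k : Fin n, tridiagonal n α β γ i k * x k = tridiagonalApply n α β γ x i := by
  obtain ⟨a, ha⟩ := i
  have hsplit : ∀ k, (if a = k then α k else if a = k + 1 then β else if k = a + 1 then γ else 0) * x k
      = ((if a = k + 1 then β * x k else 0) + (if a = k then α a * x a else 0)) +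
          (if k = a + 1 then γ * x k else 0) := by
    intro k
    split_ifs <;> first | omega | simp_all
  simp only [tridiagonal, Matrix.of_apply, tridiagonalApply]
  rw [Fin.sum_univ_eq_sum_range (fun k => (if a = k then α k else if a = k + 1 then β
    else if k = a + 1 then γ else 0) * x k), sum_congr rfl fun k _ => hsplit k,
    sum_add_distrib, sum_add_distrib, sum_ite_eq, sum_ite_eq', if_pos (mem_range.2 ha)]
  simp only [mem_range]
  congr 2
  cases a with
  | zero => simp
  | succ b => simp [Nat.lt_of_succ_lt ha]

end Tridiagonal

section Usmani

variable {K : Type*} [Field K]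

/-- Usmani's formula for the inverse of `tridiagonal n α β γ`, where `θ k` and `φ k` stand for the
determinants of the blocks on the rows `< k` and `≥ k`. -/
def tridiagonalInvEntry (n : ℕ) (β γ : K) (θ φ : ℕ → K) (i j : ℕ) : K :=
  if i ≤ j then (-γ) ^ (j - i) * θ i * φ (j + 1) / θ n
  else (-β) ^ (i - j) * θ j * φ (i + 1) / θ n

variable {n : ℕ} {α : ℕ → K} {β γ : K} {θ φ : ℕ → K}

theorem tridiagonalInvEntry_of_le {i j : ℕ} (h : i ≤ j) :
    tridiagonalInvEntry n β γ θ φ i j = (-γ) ^ (j - i) * θ i * φ (j + 1) / θ n :=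
  if_pos h

theorem tridiagonalInvEntry_of_ge {i j : ℕ} (h : j ≤ i) :
    tridiagonalInvEntry n β γ θ φ i j = (-β) ^ (i - j) * θ j * φ (i + 1) / θ n := by
  rcases h.eq_or_lt with rfl | h
  · simp [tridiagonalInvEntry]
  · exact if_neg h.not_ge

theorem tridiagonalApply_invEntry_of_lt
    (hθ : ∀ k < n, θ (k + 1) = α k * θ k - if 1 ≤ k then β * γ * θ (k - 1) else 0)
    {a b : ℕ} (hab : a < b) (hb : b < n) :
    tridiagonalApply n α β γ (tridiagonalInvEntry n β γ θ φ · b) a = 0 := by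
  obtain ⟨c, rfl⟩ := Nat.exists_eq_add_of_lt hab
  simp only [tridiagonalApply, if_pos (show a + 1 < n by omega),
    tridiagonalInvEntry_of_le (show a ≤ a + c + 1 by omega),
    tridiagonalInvEntry_of_le (show a + 1 ≤ a + c + 1 by omega),
    show a + c + 1 - a = c + 1 by omega, show a + c + 1 - (a + 1) = c by omega, hθ a (by omega)]
  split_ifs
  · rw [tridiagonalInvEntry_of_le (by omega), show a + c + 1 - (a - 1) = c + 2 by omega]
    ring
  · ring

theorem tridiagonalApply_invEntry_of_gt
    (hφ : ∀ k < n, φ k = α k * φ (k + 1) - if k + 1 < n then β * γ * φ (k + 2) else 0)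
    {a b : ℕ} (hba : b < a) (ha : a < n) :
    tridiagonalApply n α β γ (tridiagonalInvEntry n β γ θ φ · b) a = 0 := by
  obtain ⟨c, rfl⟩ := Nat.exists_eq_add_of_lt hba
  simp only [tridiagonalApply, if_pos (show 1 ≤ b + c + 1 by omega),
    tridiagonalInvEntry_of_ge (show b ≤ b + c + 1 - 1 by omega),
    tridiagonalInvEntry_of_ge (show b ≤ b + c + 1 by omega),
    show b + c + 1 - 1 - b = c by omega, show b + c + 1 - b = c + 1 by omega,
    show b + c + 1 - 1 + 1 = b + c + 1 by omega, hφ (b + c + 1) ha]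
  split_ifs
  · rw [tridiagonalInvEntry_of_ge (by omega), show b + c + 1 + 1 - b = c + 2 by omega]
    ring
  · ring

/-- The expansion of the determinant `θ n` along the cut between rows `m` and `m + 1`. -/
theorem theta_phi_expansion
    (hθ : ∀ k < n, θ (k + 1) = α k * θ k - if 1 ≤ k then β * γ * θ (k - 1) else 0)
    (hφ : ∀ k < n, φ k = α k * φ (k + 1) - if k + 1 < n then β * γ * φ (k + 2) else 0)
    (hφn : φ n = 1) {m : ℕ} (hm : m < n) :
    θ (m + 1) * φ (m + 1) - (if m + 1 < n then β * γ * θ m * φ (m + 2) else 0) = θ n := by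
  induction h : n - (m + 1) generalizing m with
  | zero => rw [show m + 1 = n by omega, hφn, if_neg (lt_irrefl n), mul_one, sub_zero]
  | succ t ih =>
    have hnext := ih (m := m + 1) (by omega) (by omega)
    rw [hθ (m + 1) (by omega), if_pos (by omega), Nat.add_sub_cancel] at hnext
    rw [if_pos (by omega), hφ (m + 1) (by omega), ← hnext]
    split_ifs <;> ring

theorem tridiagonalApply_invEntry_self
    (hθ : ∀ k < n, θ (k + 1) = α k * θ k - if 1 ≤ k then β * γ * θ (k - 1) else 0)
    (hφ : ∀ k < n, φ k = α k * φ (k + 1) - if k + 1 < n then β * γ * φ (k + 2) else 0)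
    (hφn : φ n = 1) (hθn : θ n ≠ 0) {a : ℕ} (ha : a < n) :
    tridiagonalApply n α β γ (tridiagonalInvEntry n β γ θ φ · a) a = 1 := by
  have hexpand := theta_phi_expansion hθ hφ hφn ha
  rw [hθ a ha] at hexpand
  simp only [tridiagonalApply, tridiagonalInvEntry_of_le (Nat.sub_le a 1),
    tridiagonalInvEntry_of_le le_rfl, tridiagonalInvEntry_of_ge (Nat.le_add_right a 1),
    Nat.sub_self, Nat.add_sub_cancel_left, pow_zero, pow_one, one_mul]
  split_ifs at hexpand ⊢ <;> (try rw [Nat.sub_sub_self ‹1 ≤ a›, pow_one]) <;> field_simp <;>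
    linear_combination hexpand

theorem tridiagonal_mul_invEntry_eq_one
    (hθ : ∀ k < n, θ (k + 1) = α k * θ k - if 1 ≤ k then β * γ * θ (k - 1) else 0)
    (hφ : ∀ k < n, φ k = α k * φ (k + 1) - if k + 1 < n then β * γ * φ (k + 2) else 0)
    (hφn : φ n = 1) (hθn : θ n ≠ 0) :
    tridiagonal n α β γ * Matrix.of (fun i j : Fin n => tridiagonalInvEntry n β γ θ φ i j) = 1 := by
  ext i j
  rw [Matrix.mul_apply, Matrix.one_apply]
  simp only [Matrix.of_apply]
  rw [sum_tridiagonal_mul α β γ i (tridiagonalInvEntry n β γ θ φ · j)]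
  rcases lt_trichotomy (i : ℕ) j with h | h | h
  · rw [if_neg (Fin.ne_of_lt h), tridiagonalApply_invEntry_of_lt hθ h j.2]
  · rw [if_pos (Fin.ext h), h, tridiagonalApply_invEntry_self hθ hφ hφn hθn j.2]
  · rw [if_neg (Fin.ne_of_gt h), tridiagonalApply_invEntry_of_gt hφ h i.2]

variable {c : K}

theorem prod_forwardPivots_recurrence {δ : ℕ → K}
    (hδ : ∀ k < n, δ (k + 1) = α k - if 1 ≤ k then c / δ k else 0)
    (hδ0 : ∀ k, 1 ≤ k → k ≤ n → δ k ≠ 0) (k : ℕ) (hk : k < n) :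
    ∏ l ∈ Ioc 0 (k + 1), δ l =
      α k * ∏ l ∈ Ioc 0 k, δ l - if 1 ≤ k then c * ∏ l ∈ Ioc 0 (k - 1), δ l else 0 := by
  rw [prod_Ioc_succ_top (Nat.zero_le k), hδ k hk]
  split_ifs with hk1
  · obtain ⟨j, rfl⟩ := Nat.exists_eq_add_of_le' hk1
    rw [prod_Ioc_succ_top (Nat.zero_le j), Nat.add_sub_cancel]
    field_simp [hδ0 (j + 1) hk1 hk.le]
  · ring

theorem prod_backwardPivots_recurrence {d : ℕ → K}
    (hd : ∀ k < n, d (k + 1) = α k - if k + 1 < n then c / d (k + 2) else 0)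
    (hd0 : ∀ k, 1 ≤ k → k ≤ n → d k ≠ 0) (k : ℕ) (hk : k < n) :
    ∏ l ∈ Ioc k n, d l =
      α k * ∏ l ∈ Ioc (k + 1) n, d l - if k + 1 < n then c * ∏ l ∈ Ioc (k + 2) n, d l else 0 := by
  rw [prod_Ioc_eq_mul_prod_Ioc_succ d hk, hd k hk]
  split_ifs with hk1
  · rw [prod_Ioc_eq_mul_prod_Ioc_succ d hk1]
    field_simp [hd0 (k + 2) (by omega) hk1]
  · ring

theorem tridiagonalInvEntry_prod_pivots {δ d : ℕ → K} (hδ0 : ∀ k, 1 ≤ k → k ≤ n → δ k ≠ 0)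
    {i j : ℕ} (hi : i ≤ n) (hj : j ≤ n) :
    tridiagonalInvEntry n β γ (fun k => ∏ l ∈ Ioc 0 k, δ l) (fun k => ∏ l ∈ Ioc k n, d l) i j =
      if i ≤ j then (-γ) ^ (j - i) * (∏ l ∈ Ioc (j + 1) n, d l) / ∏ l ∈ Ioc i n, δ l
      else (-β) ^ (i - j) * (∏ l ∈ Ioc (i + 1) n, d l) / ∏ l ∈ Ioc j n, δ l := by
  have hθ0 : ∀ k ≤ n, ∏ l ∈ Ioc 0 k, δ l ≠ 0 := fun k hk =>
    prod_ne_zero_iff.2 fun l hl => hδ0 l (mem_Ioc.1 hl).1 ((mem_Ioc.1 hl).2.trans hk)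
  simp only [tridiagonalInvEntry]
  split_ifs
  · rw [← prod_Ioc_consecutive δ (Nat.zero_le i) hi]
    field_simp [hθ0 i hi]
  · rw [← prod_Ioc_consecutive δ (Nat.zero_le j) hj]
    field_simp [hθ0 j hj]

end Usmani

section Pivots

variable {μ : ℝ} {n : ℕ}

theorem forwardPivot_succ {δ : ℕ → ℝ} (hδ1 : δ 1 = 2)
    (hδrec : ∀ j : ℕ, 2 ≤ j → j ≤ n → δ j = 2 * j + μ ^ 2 / δ (j - 1)) (k : ℕ) (hk : k < n) :
    δ (k + 1) = 2 * ((k : ℝ) + 1) - if 1 ≤ k then μ * -μ / δ k else 0 := by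
  split_ifs with hk1
  · rw [hδrec (k + 1) (by omega) hk, Nat.add_sub_cancel]
    push_cast
    ring
  · obtain rfl : k = 0 := by omega
    simp [hδ1]

theorem backwardPivot_succ {d : ℕ → ℝ} (hdn : d n = 2 * n)
    (hdrec : ∀ j : ℕ, 1 ≤ j → j < n → d j = 2 * j + μ ^ 2 / d (j + 1)) (k : ℕ) (hk : k < n) :
    d (k + 1) = 2 * ((k : ℝ) + 1) - if k + 1 < n then μ * -μ / d (k + 2) else 0 := by
  split_ifs with hk1
  · rw [hdrec (k + 1) (by omega) hk1]
    push_cast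
    ring
  · obtain rfl : n = k + 1 := by omega
    rw [hdn]
    push_cast
    ring

end Pivots

theorem stmt_9_general (μ : ℝ) (n : ℕ)
    (T : Matrix (Fin n) (Fin n) ℝ)
    (hT : ∀ i j : Fin n, T i j =
      if (i : ℕ) = j then (2 * ((j : ℕ) + 1) : ℝ)
      else if (i : ℕ) = (j : ℕ) + 1 then μ
      else if (j : ℕ) = (i : ℕ) + 1 then -μ
      else 0)
    (δ d : ℕ → ℝ)
    (hδ1 : δ 1 = 2)
    (hδrec : ∀ j : ℕ, 2 ≤ j → j ≤ n → δ j = 2 * j + μ ^ 2 / δ (j - 1))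
    (hdn : d n = 2 * n)
    (hdrec : ∀ j : ℕ, 1 ≤ j → j < n → d j = 2 * j + μ ^ 2 / d (j + 1))
    (hδpos : ∀ j : ℕ, 1 ≤ j → j ≤ n → 0 < δ j)
    (hdpos : ∀ j : ℕ, 1 ≤ j → j ≤ n → 0 < d j) :
    IsUnit T ∧
    ∀ i j : Fin n,
      T⁻¹ i j =
        if (i : ℕ) ≤ j then
          μ ^ ((j : ℕ) - i) * (∏ l ∈ Finset.Icc ((j : ℕ) + 2) n, d l) /
            ∏ l ∈ Finset.Icc ((i : ℕ) + 1) n, δ l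
        else
          (-1 : ℝ) ^ ((i : ℕ) + (j : ℕ)) * μ ^ ((i : ℕ) - j) *
            (∏ l ∈ Finset.Icc ((i : ℕ) + 2) n, d l) /
            ∏ l ∈ Finset.Icc ((j : ℕ) + 1) n, δ l := by
  have hδ0 : ∀ k, 1 ≤ k → k ≤ n → δ k ≠ 0 := fun k h₁ h₂ => (hδpos k h₁ h₂).ne'
  obtain rfl : T = tridiagonal n (fun k => 2 * ((k : ℝ) + 1)) μ (-μ) := Matrix.ext hT
  have hTS := tridiagonal_mul_invEntry_eq_one (θ := fun k => ∏ l ∈ Ioc 0 k, δ l)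
    (φ := fun k => ∏ l ∈ Ioc k n, d l)
    (prod_forwardPivots_recurrence (forwardPivot_succ hδ1 hδrec) hδ0)
    (prod_backwardPivots_recurrence (backwardPivot_succ hdn hdrec)
      fun k h₁ h₂ => (hdpos k h₁ h₂).ne')
    (by simp) (prod_ne_zero_iff.2 fun l hl => hδ0 l (mem_Ioc.1 hl).1 (mem_Ioc.1 hl).2)
  refine ⟨IsUnit.of_mul_eq_one _ hTS, fun i j => ?_⟩
  rw [Matrix.inv_eq_right_inv hTS, Matrix.of_apply, tridiagonalInvEntry_prod_pivots hδ0 i.2.le j.2.le,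
    Icc_add_one_left_eq_Ioc, Icc_add_one_left_eq_Ioc]
  split_ifs
  · rw [neg_neg, ← Icc_add_one_left_eq_Ioc ((j : ℕ) + 1)]
    rfl
  · rw [neg_pow, ← Icc_add_one_left_eq_Ioc ((i : ℕ) + 1), show (i : ℕ) + j = i - j + 2 * j by omega,
      pow_add, pow_mul, neg_one_sq, one_pow, mul_one]
    rfl

theorem stmt_9 (μ : ℝ) (hμ : 0 < μ) (n : ℕ)
    (T : Matrix (Fin n) (Fin n) ℝ)
    (hT : ∀ i j : Fin n, T i j =
      if (i : ℕ) = j then (2 * ((j : ℕ) + 1) : ℝ)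
      else if (i : ℕ) = (j : ℕ) + 1 then μ
      else if (j : ℕ) = (i : ℕ) + 1 then -μ
      else 0)
    (δ d : ℕ → ℝ)
    (hδ1 : δ 1 = 2)
    (hδrec : ∀ j : ℕ, 2 ≤ j → j ≤ n → δ j = 2 * j + μ ^ 2 / δ (j - 1))
    (hdn : d n = 2 * n)
    (hdrec : ∀ j : ℕ, 1 ≤ j → j < n → d j = 2 * j + μ ^ 2 / d (j + 1))
    (hδpos : ∀ j : ℕ, 1 ≤ j → j ≤ n → 0 < δ j)
    (hdpos : ∀ j : ℕ, 1 ≤ j → j ≤ n → 0 < d j) :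
    IsUnit T ∧
    ∀ i j : Fin n,
      T⁻¹ i j =
        if (i : ℕ) ≤ j then
          μ ^ ((j : ℕ) - i) * (∏ l ∈ Finset.Icc ((j : ℕ) + 2) n, d l) /
            ∏ l ∈ Finset.Icc ((i : ℕ) + 1) n, δ l
        else
          (-1 : ℝ) ^ ((i : ℕ) + (j : ℕ)) * μ ^ ((i : ℕ) - j) *
            (∏ l ∈ Finset.Icc ((i : ℕ) + 2) n, d l) /
            ∏ l ∈ Finset.Icc ((j : ℕ) + 1) n, δ l :=
  stmt_9_general μ n T hT δ d hδ1 hδrec hdn hdrec hδpos hdpos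
end

section
/- Let μ > 0, n ∈ ℕ, and T(n) as above. For all 2 ≤ i ≤ j ≤ n, |(T(n)^{-1})_{ij}| ≥ 2(i−1) μ^{j−i} / (d_{i−1} d_i ⋯ d_j). -/
/-!
Number rows and columns from `0`, as in `Fin n`, and let `Dₖ` be the leading principal `k × k`
minor of `T`, a continuant: `D₀ = 1`, `D₁ = 2`, `D_{k+1} = 2(k+1) D_k + μ² D_{k-1}`.
The inverse is explicit: `(T⁻¹)ᵢⱼ = Dᵢ μ^(j-i) / (d₁ ⋯ d_{j+1})` for `i ≤ j` and
`(T⁻¹)ᵢⱼ = Dⱼ (-μ)^(i-j) / (d₁ ⋯ d_{i+1})` for `i ≥ j`. Row by row, `T X = 1` follows from the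
continuant recursion above the diagonal, from `d_k d_{k+1} = 2k d_{k+1} + μ²` (and `d_n = 2n` in
the last row) below it, and on the diagonal from `d₁ ⋯ d_k = d_k D_{k-1} + μ² D_{k-2}`.

The bound then reads `2i d₁ ⋯ d_{i-1} ≤ Dᵢ`. Multiplied by `dᵢ d_{i+1}` and rewritten with the
same two identities, it becomes `2i D_{i-1} ≤ Dᵢ`, which the recursion makes obvious.
-/

open Finset

def tridiag (μ : ℝ) (n : ℕ) : Matrix (Fin n) (Fin n) ℝ :=
  Matrix.of fun i j =>
    if (i : ℕ) = j then 2 * ((j : ℕ) + 1)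
    else if (i : ℕ) = (j : ℕ) + 1 then μ
    else if (j : ℕ) = (i : ℕ) + 1 then -μ
    else 0

def tridiagRow (μ : ℝ) (n : ℕ) (g : ℕ → ℝ) (r : ℕ) : ℝ :=
  (if r = 0 then 0 else μ * g (r - 1)) + 2 * (r + 1) * g r -
    if r + 1 < n then μ * g (r + 1) else 0

theorem sum_range_ite_add_one_eq {M : Type*} [AddCommMonoid M] {n r : ℕ} (hr : r ≤ n)
    (f : ℕ → M) :
    ∑ k ∈ range n, (if k + 1 = r then f k else 0) = if r = 0 then 0 else f (r - 1) := by
  rcases r with _ | r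
  · simp
  · simp [show r < n by omega]

theorem sum_tridiag_mul (μ : ℝ) {n : ℕ} (r : Fin n) (g : ℕ → ℝ) :
    ∑ k, tridiag μ n r k * g k = tridiagRow μ n g r := by
  have hterm : ∀ k : Fin n, tridiag μ n r k * g k =
      (if (k : ℕ) + 1 = r then μ * g k else 0) + (if (r : ℕ) = k then 2 * (r + 1) * g k else 0) -
        if (r : ℕ) + 1 = k then μ * g k else 0 := by
    intro k
    rw [tridiag, Matrix.of_apply]
    split_ifs <;> first | omega | (rw [Fin.val_inj.1 ‹(r : ℕ) = k›]; ring) | ring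
  simp only [hterm, sum_add_distrib, sum_sub_distrib]
  rw [Fin.sum_univ_eq_sum_range (fun k => if k + 1 = (r : ℕ) then μ * g k else 0),
    Fin.sum_univ_eq_sum_range (fun k => if (r : ℕ) = k then 2 * (r + 1) * g k else 0),
    Fin.sum_univ_eq_sum_range (fun k => if (r : ℕ) + 1 = k then μ * g k else 0),
    sum_range_ite_add_one_eq r.2.le, sum_ite_eq, sum_ite_eq, tridiagRow]
  simp [r.2]

/-- `continuant μ (k + 1)` is the leading principal `k × k` minor of the matrix `tridiag μ n`. -/
def continuant (μ : ℝ) : ℕ → ℝ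
  | 0 => 0
  | 1 => 1
  | k + 2 => 2 * (k + 1) * continuant μ (k + 1) + μ ^ 2 * continuant μ k

theorem continuant_nonneg (μ : ℝ) : ∀ k, 0 ≤ continuant μ k
  | 0 => le_rfl
  | 1 => zero_le_one
  | k + 2 => by
    have := continuant_nonneg μ k
    have := continuant_nonneg μ (k + 1)
    rw [continuant]
    positivity

theorem two_mul_continuant_le (μ : ℝ) (k : ℕ) :
    2 * (k + 1) * continuant μ (k + 1) ≤ continuant μ (k + 2) := by
  rw [continuant]
  have := mul_nonneg (sq_nonneg μ) (continuant_nonneg μ k)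
  linarith

section BackwardRecursion

variable {μ : ℝ} {n : ℕ} {d : ℕ → ℝ}

theorem d_mul_d_succ (hdrec : ∀ j : ℕ, 1 ≤ j → j < n → d j = 2 * j + μ ^ 2 / d (j + 1))
    (hdpos : ∀ j : ℕ, 1 ≤ j → j ≤ n → 0 < d j) {k : ℕ} (hk : 1 ≤ k) (hkn : k < n) :
    d k * d (k + 1) = 2 * k * d (k + 1) + μ ^ 2 := by
  have := (hdpos (k + 1) (by omega) hkn).ne'
  rw [hdrec k hk hkn]
  field_simp

theorem prod_Icc_one_pos (hdpos : ∀ j : ℕ, 1 ≤ j → j ≤ n → 0 < d j) {k : ℕ} (hk : k ≤ n) :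
    0 < ∏ l ∈ Icc 1 k, d l :=
  prod_pos fun l hl => hdpos l (mem_Icc.1 hl).1 ((mem_Icc.1 hl).2.trans hk)

theorem prod_Icc_one_eq_continuant
    (hdrec : ∀ j : ℕ, 1 ≤ j → j < n → d j = 2 * j + μ ^ 2 / d (j + 1))
    (hdpos : ∀ j : ℕ, 1 ≤ j → j ≤ n → 0 < d j) :
    ∀ k, k + 1 ≤ n →
      ∏ l ∈ Icc 1 (k + 1), d l = d (k + 1) * continuant μ (k + 1) + μ ^ 2 * continuant μ k
  | 0, _ => by simp [continuant]
  | k + 1, hk => by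
    rw [prod_Icc_succ_top (by omega), prod_Icc_one_eq_continuant hdrec hdpos k (by omega)]
    have hdd := d_mul_d_succ hdrec hdpos (k := k + 1) (by omega) (by omega)
    rw [continuant]
    push_cast at hdd ⊢
    linear_combination continuant μ (k + 1) * hdd

theorem two_mul_prod_le_continuant
    (hdrec : ∀ j : ℕ, 1 ≤ j → j < n → d j = 2 * j + μ ^ 2 / d (j + 1))
    (hdpos : ∀ j : ℕ, 1 ≤ j → j ≤ n → 0 < d j) {m : ℕ} (hm : m + 2 ≤ n) :
    2 * (m + 1) * ∏ l ∈ Icc 1 m, d l ≤ continuant μ (m + 2) := by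
  have hdd := d_mul_d_succ hdrec hdpos (k := m + 1) (by omega) (by omega)
  have hprod := prod_Icc_one_eq_continuant hdrec hdpos (m + 1) hm
  rw [prod_Icc_succ_top (by omega), prod_Icc_succ_top (by omega)] at hprod
  have hcont := mul_le_mul_of_nonneg_left (two_mul_continuant_le μ m) (sq_nonneg μ)
  refine le_of_mul_le_mul_right ?_
    (mul_pos (hdpos (m + 1) (by omega) (by omega)) (hdpos (m + 2) (by omega) hm))
  push_cast at hdd
  linear_combination 2 * (m + 1) * hprod + hcont - continuant μ (m + 2) * hdd

end BackwardRecursion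

noncomputable def tridiagInv (μ : ℝ) (d : ℕ → ℝ) (i j : ℕ) : ℝ :=
  if i ≤ j then continuant μ (i + 1) * μ ^ (j - i) / ∏ l ∈ Icc 1 (j + 1), d l
  else continuant μ (j + 1) * (-μ) ^ (i - j) / ∏ l ∈ Icc 1 (i + 1), d l

theorem tridiagInv_of_le {μ : ℝ} {d : ℕ → ℝ} {i j : ℕ} (h : i ≤ j) :
    tridiagInv μ d i j = continuant μ (i + 1) * μ ^ (j - i) / ∏ l ∈ Icc 1 (j + 1), d l :=
  if_pos h

theorem tridiagInv_of_ge {μ : ℝ} {d : ℕ → ℝ} {i j : ℕ} (h : j ≤ i) :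
    tridiagInv μ d i j = continuant μ (j + 1) * (-μ) ^ (i - j) / ∏ l ∈ Icc 1 (i + 1), d l := by
  rcases h.eq_or_lt with rfl | h
  · simp [tridiagInv]
  · simp [tridiagInv, Nat.not_le.2 h]

theorem tridiagRow_tridiagInv_of_lt (μ : ℝ) {n : ℕ} (d : ℕ → ℝ) {r j : ℕ} (hrj : r < j)
    (hj : j < n) : tridiagRow μ n (tridiagInv μ d · j) r = 0 := by
  obtain ⟨m, rfl⟩ : ∃ m, j = r + 1 + m := ⟨j - (r + 1), by omega⟩
  rw [tridiagRow, if_pos (show r + 1 < n by omega), tridiagInv_of_le (i := r) (by omega),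
    tridiagInv_of_le (i := r + 1) (by omega), show r + 1 + m - r = m + 1 by omega,
    show r + 1 + m - (r + 1) = m by omega]
  rcases r with _ | s
  · simp only [if_pos, continuant]
    ring
  · rw [if_neg (by omega), tridiagInv_of_le (by omega),
      show s + 1 + 1 + m - (s + 1 - 1) = m + 2 by omega, Nat.add_sub_cancel]
    simp only [continuant]
    push_cast
    ring

theorem tridiagRow_tridiagInv_self {μ : ℝ} {n : ℕ} {d : ℕ → ℝ} (hdn : d n = 2 * n)
    (hdrec : ∀ j : ℕ, 1 ≤ j → j < n → d j = 2 * j + μ ^ 2 / d (j + 1))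
    (hdpos : ∀ j : ℕ, 1 ≤ j → j ≤ n → 0 < d j) {j : ℕ} (hj : j < n) :
    tridiagRow μ n (tridiagInv μ d · j) j = 1 := by
  have hP := prod_Icc_one_eq_continuant hdrec hdpos j hj
  have hPpos := prod_Icc_one_pos hdpos (k := j + 1) hj
  have hprev : (if j = 0 then 0 else μ * tridiagInv μ d (j - 1) j) =
      μ ^ 2 * continuant μ j / ∏ l ∈ Icc 1 (j + 1), d l := by
    rcases j with _ | j
    · simp [continuant]
    · rw [if_neg j.succ_ne_zero, tridiagInv_of_le (by omega), Nat.add_sub_cancel,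
        add_tsub_cancel_left]
      ring
  rw [tridiagRow, hprev, tridiagInv_of_le le_rfl, Nat.sub_self, pow_zero]
  by_cases hj1 : j + 1 < n
  · have hdd := d_mul_d_succ hdrec hdpos (k := j + 1) (by omega) hj1
    have := hdpos (j + 1 + 1) (by omega) hj1
    rw [if_pos hj1, tridiagInv_of_ge (by omega), prod_Icc_succ_top (b := j + 1) (by omega),
      add_tsub_cancel_left]
    field_simp
    push_cast at hdd
    linear_combination -d (j + 1 + 1) * hP - continuant μ (j + 1) * hdd
  · have hn : (n : ℝ) = j + 1 := by exact_mod_cast (by omega : n = j + 1)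
    have hd : d (j + 1) = 2 * (j + 1) := by rw [show j + 1 = n by omega, hdn, hn]
    rw [if_neg hj1]
    rw [hd] at hP
    field_simp
    linear_combination -hP

theorem tridiagRow_tridiagInv_of_gt {μ : ℝ} {n : ℕ} {d : ℕ → ℝ} (hdn : d n = 2 * n)
    (hdrec : ∀ j : ℕ, 1 ≤ j → j < n → d j = 2 * j + μ ^ 2 / d (j + 1))
    (hdpos : ∀ j : ℕ, 1 ≤ j → j ≤ n → 0 < d j) {r j : ℕ} (hjr : j < r) (hr : r < n) :
    tridiagRow μ n (tridiagInv μ d · j) r = 0 := by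
  obtain ⟨m, rfl⟩ : ∃ m, r = j + m + 1 := ⟨r - j - 1, by omega⟩
  have := prod_Icc_one_pos hdpos (k := j + m + 1) (by omega)
  have := hdpos (j + m + 2) (by omega) hr
  rw [tridiagRow, if_neg (by omega), Nat.add_sub_cancel, tridiagInv_of_ge (by omega),
    tridiagInv_of_ge (by omega), prod_Icc_succ_top (b := j + m + 1) (by omega),
    show j + m - j = m by omega, show j + m + 1 - j = m + 1 by omega]
  by_cases hr1 : j + m + 1 + 1 < n
  · have := hdpos (j + m + 3) (by omega) hr1
    rw [if_pos hr1, tridiagInv_of_ge (by omega),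
      prod_Icc_succ_top (b := j + m + 1 + 1) (by omega),
      prod_Icc_succ_top (b := j + m + 1) (by omega), show j + m + 1 + 1 - j = m + 2 by omega,
      hdrec (j + m + 2) (by omega) hr1]
    field_simp
    push_cast
    ring
  · have hn : (n : ℝ) = j + m + 2 := by exact_mod_cast (by omega : n = j + m + 2)
    have hd : d (j + m + 1 + 1) = 2 * (j + m + 2) := by
      rw [show j + m + 1 + 1 = n by omega, hdn, hn]
    rw [if_neg hr1, hd]
    field_simp
    push_cast
    ring

theorem tridiagRow_tridiagInv {μ : ℝ} {n : ℕ} {d : ℕ → ℝ} (hdn : d n = 2 * n)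
    (hdrec : ∀ j : ℕ, 1 ≤ j → j < n → d j = 2 * j + μ ^ 2 / d (j + 1))
    (hdpos : ∀ j : ℕ, 1 ≤ j → j ≤ n → 0 < d j) {r j : ℕ} (hr : r < n) (hj : j < n) :
    tridiagRow μ n (tridiagInv μ d · j) r = if r = j then 1 else 0 := by
  rcases lt_trichotomy r j with hrj | rfl | hjr
  · rw [if_neg hrj.ne, tridiagRow_tridiagInv_of_lt μ d hrj hj]
  · rw [if_pos rfl, tridiagRow_tridiagInv_self hdn hdrec hdpos hj]
  · rw [if_neg hjr.ne', tridiagRow_tridiagInv_of_gt hdn hdrec hdpos hjr hr]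

theorem tridiag_mul_tridiagInv {μ : ℝ} {n : ℕ} {d : ℕ → ℝ} (hdn : d n = 2 * n)
    (hdrec : ∀ j : ℕ, 1 ≤ j → j < n → d j = 2 * j + μ ^ 2 / d (j + 1))
    (hdpos : ∀ j : ℕ, 1 ≤ j → j ≤ n → 0 < d j) :
    tridiag μ n * Matrix.of (fun i j : Fin n => tridiagInv μ d i j) = 1 := by
  ext r j
  rw [Matrix.mul_apply, Matrix.one_apply]
  simp only [Matrix.of_apply]
  rw [sum_tridiag_mul μ r (tridiagInv μ d · j), tridiagRow_tridiagInv hdn hdrec hdpos r.2 j.2]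
  simp only [Fin.val_inj]

theorem stmt_11 (μ : ℝ) (hμ : 0 < μ) (n : ℕ)
    (T : Matrix (Fin n) (Fin n) ℝ)
    (hT : ∀ i j : Fin n, T i j =
      if (i : ℕ) = j then (2 * ((j : ℕ) + 1) : ℝ)
      else if (i : ℕ) = (j : ℕ) + 1 then μ
      else if (j : ℕ) = (i : ℕ) + 1 then -μ
      else 0)
    (d : ℕ → ℝ)
    (hdn : d n = 2 * n)
    (hdrec : ∀ j : ℕ, 1 ≤ j → j < n → d j = 2 * j + μ ^ 2 / d (j + 1))
    (hdpos : ∀ j : ℕ, 1 ≤ j → j ≤ n → 0 < d j) :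
    ∀ i j : Fin n, 1 ≤ (i : ℕ) → (i : ℕ) ≤ j →
      2 * (i : ℕ) * μ ^ ((j : ℕ) - i) / ∏ l ∈ Finset.Icc (i : ℕ) ((j : ℕ) + 1), d l ≤
        |T⁻¹ i j| := by
  intro i j hi hij
  obtain rfl : T = tridiag μ n := Matrix.ext hT
  obtain ⟨m, hm⟩ : ∃ m, (i : ℕ) = m + 1 := ⟨i - 1, by omega⟩
  have hsplit : ∏ l ∈ Icc 1 ((j : ℕ) + 1), d l =
      (∏ l ∈ Icc 1 m, d l) * ∏ l ∈ Icc (i : ℕ) ((j : ℕ) + 1), d l := by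
    have hIcc : ∀ k, Icc 1 k = Ioc 0 k := fun k => Icc_add_one_left_eq_Ioc 0 k
    rw [hm, hIcc, hIcc, Icc_add_one_left_eq_Ioc, prod_Ioc_consecutive _ m.zero_le (by omega)]
  have hQ : 0 < ∏ l ∈ Icc (i : ℕ) ((j : ℕ) + 1), d l :=
    prod_pos fun l hl => hdpos l (hi.trans (mem_Icc.1 hl).1) ((mem_Icc.1 hl).2.trans j.2)
  have hbound : 2 * ((i : ℕ) : ℝ) * ∏ l ∈ Icc 1 m, d l ≤ continuant μ (i + 1) := by
    rw [hm]
    push_cast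
    exact two_mul_prod_le_continuant hdrec hdpos (by omega)
  rw [Matrix.inv_eq_right_inv (tridiag_mul_tridiagInv hdn hdrec hdpos), Matrix.of_apply,
    tridiagInv_of_le hij, hsplit, mul_comm (∏ l ∈ Icc 1 m, d l), ← div_div]
  refine le_trans ?_ (le_abs_self _)
  rw [le_div_iff₀ (prod_Icc_one_pos hdpos (by omega)), div_mul_eq_mul_div]
  refine div_le_div_of_nonneg_right ?_ hQ.le
  calc 2 * ((i : ℕ) : ℝ) * μ ^ ((j : ℕ) - i) * ∏ l ∈ Icc 1 m, d l
      = 2 * (i : ℕ) * (∏ l ∈ Icc 1 m, d l) * μ ^ ((j : ℕ) - i) := by ring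
    _ ≤ continuant μ (i + 1) * μ ^ ((j : ℕ) - i) := by gcongr
end

section
/- Let μ ≥ 0, let T_μ be the infinite tridiagonal operator on ℓ¹(ℕ) with diagonal 2n, subdiagonal μ, superdiagonal −μ, assumed boundedly invertible, and let ξ_μ = Σ_{i≥1} (−1)^{i+1}(T_μ^{-1})_{i,1} = ‖(T_μ^{-1})_{col(1)}‖₁ > 0. Then the operator L_μ on ℓ¹(ℕ₀) written in block form as L_μ = [[1, θ₀ᵀ],[μ e₀, T_μ]] with θ₀ = (−2,2,−2,2,…)ᵀ and e₀ = (1,0,0,…)ᵀ is boundedly invertible, with Schur complement 1 + 2μξ_μ, and the first column of L_μ^{-1} is (1/(1+2ξ_μμ), −(μ/(1+2ξ_μμ))(T_μ^{-1})_{col(1)})ᵀ. -/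
/-!
Splitting off the coordinate `0` identifies `ℓ¹(ℕ₀)` with `ℝ × ℓ¹(ℕ)`, and in this splitting `L`
is the bordered operator `(t, x) ↦ (t + θ₀ᵀ x, t • μ e₀ + T_μ x)`. Block elimination inverts any
bordered operator `[[a, θ], [b, T]]` whose corner `T` is invertible and whose Schur complement
`s = a - θ (T⁻¹ b)` is nonzero: the inverse sends `(t, y)` to `(g, T⁻¹ y - g • T⁻¹ b)` with
`g = s⁻¹ (t - θ (T⁻¹ y))`. Here `s = 1 - μ θ₀ᵀ T_μ⁻¹ e₀ = 1 + 2μξ > 0`, because `θ₀` alternates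
in sign and the alternating sum of the first column of `T_μ⁻¹` is `ξ`.
-/

open scoped lp

noncomputable section

namespace ContinuousLinearMap

variable {𝕜 E : Type*} [NormedField 𝕜] [NormedAddCommGroup E] [NormedSpace 𝕜 E]

def bordered (a : 𝕜) (θ : E →L[𝕜] 𝕜) (b : E) (T : E →L[𝕜] E) : 𝕜 × E →L[𝕜] 𝕜 × E :=
  (a • fst 𝕜 𝕜 E + θ ∘L snd 𝕜 𝕜 E).prod ((fst 𝕜 𝕜 E).smulRight b + T ∘L snd 𝕜 𝕜 E)

@[simp] lemma bordered_apply (a : 𝕜) (θ : E →L[𝕜] 𝕜) (b : E) (T : E →L[𝕜] E) (p : 𝕜 × E) :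
    bordered a θ b T p = (a * p.1 + θ p.2, p.1 • b + T p.2) := rfl

lemma bordered_blocks (M : 𝕜 × E →L[𝕜] 𝕜 × E) :
    bordered (M (1, 0)).1 (fst 𝕜 𝕜 E ∘L M ∘L inr 𝕜 𝕜 E) (M (1, 0)).2
      (snd 𝕜 𝕜 E ∘L M ∘L inr 𝕜 𝕜 E) = M := by
  refine ext fun ⟨t, x⟩ => ?_
  have hM : M (t, x) = t • M (1, 0) + M (0, x) := by
    rw [← map_smul, ← map_add]; simp
  rw [hM]
  ext <;> simp [mul_comm]

def schurComplement (a : 𝕜) (θ : E →L[𝕜] 𝕜) (b : E) (Tinv : E →L[𝕜] E) : 𝕜 := a - θ (Tinv b)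

def borderedInvRow (a : 𝕜) (θ : E →L[𝕜] 𝕜) (b : E) (Tinv : E →L[𝕜] E) : 𝕜 × E →L[𝕜] 𝕜 :=
  (schurComplement a θ b Tinv)⁻¹ • (fst 𝕜 𝕜 E - θ ∘L Tinv ∘L snd 𝕜 𝕜 E)

def borderedInv (a : 𝕜) (θ : E →L[𝕜] 𝕜) (b : E) (Tinv : E →L[𝕜] E) : 𝕜 × E →L[𝕜] 𝕜 × E :=
  (borderedInvRow a θ b Tinv).prod
    (Tinv ∘L snd 𝕜 𝕜 E - (borderedInvRow a θ b Tinv).smulRight (Tinv b))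

lemma borderedInvRow_apply (a : 𝕜) (θ : E →L[𝕜] 𝕜) (b : E) (Tinv : E →L[𝕜] E) (p : 𝕜 × E) :
    borderedInvRow a θ b Tinv p = (schurComplement a θ b Tinv)⁻¹ * (p.1 - θ (Tinv p.2)) := rfl

lemma borderedInv_apply (a : 𝕜) (θ : E →L[𝕜] 𝕜) (b : E) (Tinv : E →L[𝕜] E) (p : 𝕜 × E) :
    borderedInv a θ b Tinv p =
      (borderedInvRow a θ b Tinv p, Tinv p.2 - borderedInvRow a θ b Tinv p • Tinv b) := rfl

lemma borderedInv_one_zero (a : 𝕜) (θ : E →L[𝕜] 𝕜) (b : E) (Tinv : E →L[𝕜] E) :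
    borderedInv a θ b Tinv (1, 0) =
      ((schurComplement a θ b Tinv)⁻¹, -(schurComplement a θ b Tinv)⁻¹ • Tinv b) := by
  simp [borderedInv_apply, borderedInvRow_apply]

variable {a : 𝕜} {θ : E →L[𝕜] 𝕜} {b : E} {T Tinv : E →L[𝕜] E}

lemma borderedInv_comp_bordered (hT : Tinv ∘L T = ContinuousLinearMap.id 𝕜 E)
    (hs : schurComplement a θ b Tinv ≠ 0) :
    borderedInv a θ b Tinv ∘L bordered a θ b T = ContinuousLinearMap.id 𝕜 (𝕜 × E) := by
  refine ext fun ⟨t, x⟩ => ?_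
  have hTx : Tinv (t • b + T x) = t • Tinv b + x := by
    rw [map_add, map_smul, ← comp_apply, hT, id_apply]
  have hg : borderedInvRow a θ b Tinv (bordered a θ b T (t, x)) = t := by
    rw [borderedInvRow_apply, bordered_apply, hTx, map_add, map_smul, smul_eq_mul]
    unfold schurComplement at hs ⊢
    field_simp
    ring
  rw [comp_apply, borderedInv_apply, hg, bordered_apply, hTx, id_apply]
  simp

lemma bordered_comp_borderedInv (hT : T ∘L Tinv = ContinuousLinearMap.id 𝕜 E)
    (hs : schurComplement a θ b Tinv ≠ 0) :
    bordered a θ b T ∘L borderedInv a θ b Tinv = ContinuousLinearMap.id 𝕜 (𝕜 × E) := by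
  refine ext fun ⟨t, y⟩ => ?_
  set g := borderedInvRow a θ b Tinv (t, y) with hg_def
  have hTy : T (Tinv y - g • Tinv b) = y - g • b := by
    simp only [map_sub, map_smul, ← comp_apply, hT, id_apply]
  have hg : a * g + θ (Tinv y - g • Tinv b) = t := by
    rw [map_sub, map_smul, smul_eq_mul, hg_def, borderedInvRow_apply]
    unfold schurComplement at *
    field_simp
    ring
  rw [comp_apply, borderedInv_apply, bordered_apply, ← hg_def, hg, hTy, id_apply]
  simp

end ContinuousLinearMap

lemma ContinuousLinearEquiv.conjContinuousAlgEquiv_comp_eq_id {𝕜 G H : Type*} [NormedField 𝕜]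
    [NormedAddCommGroup G] [NormedSpace 𝕜 G] [NormedAddCommGroup H] [NormedSpace 𝕜 H]
    (e : G ≃L[𝕜] H) {A B : G →L[𝕜] G} (h : A ∘L B = ContinuousLinearMap.id 𝕜 G) :
    e.conjContinuousAlgEquiv A ∘L e.conjContinuousAlgEquiv B = ContinuousLinearMap.id 𝕜 H := by
  rw [← ContinuousLinearMap.mul_def, ← map_mul, ContinuousLinearMap.mul_def, h,
    ← ContinuousLinearMap.one_def, map_one, ContinuousLinearMap.one_def]

namespace lp

open ContinuousLinearMap

variable {𝕜 E : Type*} [NormedField 𝕜] [NormedAddCommGroup E] [NormedSpace 𝕜 E]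

lemma norm_eq_tsum_norm_of_one (f : ℓ¹(ℕ, E)) : ‖f‖ = ∑' n, ‖f n‖ := by
  simp [norm_eq_tsum_rpow (by norm_num : 0 < (1 : ENNReal).toReal)]

lemma memℓp_one_iff {f : ℕ → E} : Memℓp f 1 ↔ Summable fun n => ‖f n‖ := by
  simp [memℓp_gen_iff (by norm_num : 0 < (1 : ENNReal).toReal)]

def tail (f : ℓ¹(ℕ, E)) : ℓ¹(ℕ, E) :=
  ⟨fun n => f (n + 1), memℓp_one_iff.2 <| (summable_nat_add_iff 1).2 (memℓp_one_iff.1 f.2)⟩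

def cons (x : E) (f : ℓ¹(ℕ, E)) : ℓ¹(ℕ, E) :=
  ⟨fun | 0 => x | n + 1 => f n,
    memℓp_one_iff.2 <| (summable_nat_add_iff 1).1 (memℓp_one_iff.1 f.2)⟩

@[simp] lemma tail_apply (f : ℓ¹(ℕ, E)) (n : ℕ) : tail f n = f (n + 1) := rfl
@[simp] lemma cons_apply_zero (x : E) (f : ℓ¹(ℕ, E)) : cons x f 0 = x := rfl
@[simp] lemma cons_apply_succ (x : E) (f : ℓ¹(ℕ, E)) (n : ℕ) : cons x f (n + 1) = f n := rfl

lemma norm_cons (x : E) (f : ℓ¹(ℕ, E)) : ‖cons x f‖ = ‖x‖ + ‖f‖ := by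
  rw [norm_eq_tsum_norm_of_one, norm_eq_tsum_norm_of_one,
    (memℓp_one_iff.1 (cons x f).2).tsum_eq_zero_add]
  rfl

lemma cons_head_tail (f : ℓ¹(ℕ, E)) : cons (f 0) (tail f) = f := by
  ext (_ | n) <;> rfl

variable (𝕜 E) in
def consEquiv : (E × ℓ¹(ℕ, E)) ≃L[𝕜] ℓ¹(ℕ, E) :=
  LinearEquiv.toContinuousLinearEquivOfBounds
    { toFun := fun p => cons p.1 p.2
      invFun := fun f => (f 0, tail f)
      map_add' := fun p q => by ext (_ | n) <;> rfl
      map_smul' := fun c p => by ext (_ | n) <;> rfl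
      left_inv := fun p => rfl
      right_inv := cons_head_tail }
    2 1
    (fun p => by
      show ‖cons p.1 p.2‖ ≤ 2 * ‖p‖
      rw [norm_cons]
      linarith [norm_fst_le p, norm_snd_le p])
    (fun f => by
      show ‖((f 0, tail f) : E × ℓ¹(ℕ, E))‖ ≤ 1 * ‖f‖
      conv_rhs => rw [← cons_head_tail f, norm_cons]
      simp [Prod.norm_def])

@[simp] lemma consEquiv_apply (p : E × ℓ¹(ℕ, E)) : consEquiv 𝕜 E p = cons p.1 p.2 := rfl
@[simp] lemma consEquiv_symm_apply (f : ℓ¹(ℕ, E)) :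
    (consEquiv 𝕜 E).symm f = (f 0, tail f) := by
  rw [ContinuousLinearEquiv.symm_apply_eq]; exact (cons_head_tail f).symm

lemma cons_zero_single (n : ℕ) (x : E) : cons 0 (lp.single 1 n x) = lp.single 1 (n + 1) x := by
  ext (_ | m) <;> simp [lp.single_apply, Pi.single_apply]

lemma cons_zero_right (x : E) : cons x 0 = lp.single 1 0 x := by
  ext (_ | m) <;> simp [lp.single_apply]

variable {α F : Type*} [DecidableEq α] [NormedAddCommGroup F] [NormedSpace 𝕜 F]

lemma hasSum_smul_apply_single (φ : ℓ¹(α, 𝕜) →L[𝕜] F) (f : ℓ¹(α, 𝕜)) :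
    HasSum (fun i => f i • φ (lp.single 1 i 1)) (φ f) := by
  convert (lp.hasSum_single ENNReal.one_ne_top f).mapL φ using 2 with i
  rw [← map_smul, ← lp.single_smul, smul_eq_mul, mul_one]

lemma ext_continuousLinearMap_single {φ ψ : ℓ¹(α, 𝕜) →L[𝕜] F}
    (h : ∀ i, φ (lp.single 1 i 1) = ψ (lp.single 1 i 1)) : φ = ψ :=
  lp.ext_continuousLinearMap ENNReal.one_ne_top fun i => ContinuousLinearMap.ext_ring (h i)

lemma consEquiv_symm_single_zero (x : 𝕜) : (consEquiv 𝕜 𝕜).symm (lp.single 1 0 x) = (x, 0) :=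
  (consEquiv 𝕜 𝕜).symm_apply_eq.2 (cons_zero_right x).symm

variable (L : ℓ¹(ℕ, 𝕜) →L[𝕜] ℓ¹(ℕ, 𝕜))

-- The row of `L` through coordinate `0`, without its diagonal entry.
def firstRow : ℓ¹(ℕ, 𝕜) →L[𝕜] 𝕜 :=
  fst 𝕜 𝕜 _ ∘L ((consEquiv 𝕜 𝕜).symm.toContinuousLinearMap ∘L L ∘L
    (consEquiv 𝕜 𝕜).toContinuousLinearMap) ∘L inr 𝕜 𝕜 _

lemma firstRow_apply (y : ℓ¹(ℕ, 𝕜)) : firstRow L y = ∑' j, y j * L (lp.single 1 (j + 1) 1) 0 := by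
  rw [← (hasSum_smul_apply_single (firstRow L) y).tsum_eq]
  congr 1 with j
  simp [firstRow, cons_zero_single]

lemma eq_conj_bordered {a : 𝕜} {b : ℓ¹(ℕ, 𝕜)} {T : ℓ¹(ℕ, 𝕜) →L[𝕜] ℓ¹(ℕ, 𝕜)}
    (ha : L (lp.single 1 0 1) 0 = a) (hb : ∀ i, L (lp.single 1 0 1) (i + 1) = b i)
    (hT : ∀ i j, L (lp.single 1 (j + 1) 1) (i + 1) = T (lp.single 1 j 1) i) :
    L = (consEquiv 𝕜 𝕜).conjContinuousAlgEquiv (bordered a (firstRow L) b T) := by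
  refine ((consEquiv 𝕜 𝕜).conjContinuousAlgEquiv.symm_apply_eq).1 ?_
  rw [← bordered_blocks ((consEquiv 𝕜 𝕜).conjContinuousAlgEquiv.symm L)]
  congr 1
  · simp [cons_zero_right, ha]
  · ext i
    simp [cons_zero_right, hb]
  · refine ext_continuousLinearMap_single fun j => ?_
    ext i
    simp [cons_zero_single, hT]

end lp

end

open ContinuousLinearMap in
theorem stmt_15_general (μ : ℝ) (hμ : 0 ≤ μ)
    (Tμ Tinv : lp (fun _ : ℕ => ℝ) 1 →L[ℝ] lp (fun _ : ℕ => ℝ) 1)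
    (hTi1 : Tinv.comp Tμ = ContinuousLinearMap.id ℝ _)
    (hTi2 : Tμ.comp Tinv = ContinuousLinearMap.id ℝ _)
    (ξ : ℝ)
    (hξpos : 0 < ξ)
    (halt : ∑' i : ℕ, (-1 : ℝ) ^ i * (Tinv (lp.single 1 0 1)) i = ξ)
    (L : lp (fun _ : ℕ => ℝ) 1 →L[ℝ] lp (fun _ : ℕ => ℝ) 1)
    (hL00 : (L (lp.single 1 0 1)) 0 = 1)
    (hLcol0 : ∀ i : ℕ, (L (lp.single 1 0 1)) (i + 1) = if i = 0 then μ else 0)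
    (hLrow0 : ∀ j : ℕ, (L (lp.single 1 (j + 1) 1)) 0 = (-1 : ℝ) ^ (j + 1) * 2)
    (hLblock : ∀ i j : ℕ, (L (lp.single 1 (j + 1) 1)) (i + 1) = (Tμ (lp.single 1 j 1)) i) :
    (1 - μ * ∑' j : ℕ, ((-1 : ℝ) ^ (j + 1) * 2) * (Tinv (lp.single 1 0 1)) j = 1 + 2 * μ * ξ) ∧
    ∃ Linv : lp (fun _ : ℕ => ℝ) 1 →L[ℝ] lp (fun _ : ℕ => ℝ) 1,
      Linv.comp L = ContinuousLinearMap.id ℝ _ ∧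
      L.comp Linv = ContinuousLinearMap.id ℝ _ ∧
      (Linv (lp.single 1 0 1)) 0 = 1 / (1 + 2 * ξ * μ) ∧
      ∀ i : ℕ, (Linv (lp.single 1 0 1)) (i + 1) =
        -(μ / (1 + 2 * ξ * μ)) * (Tinv (lp.single 1 0 1)) i := by
  set e₀ : ℓ¹(ℕ, ℝ) := lp.single 1 0 1
  set e := lp.consEquiv ℝ ℝ
  set θ := lp.firstRow L
  have hL : L = e.conjContinuousAlgEquiv (bordered 1 θ (μ • e₀) Tμ) :=
    lp.eq_conj_bordered L hL00 (fun i => by simp [e₀, hLcol0, lp.single_apply, Pi.single_apply])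
      hLblock
  have hschur : schurComplement 1 θ (μ • e₀) Tinv =
      1 - μ * ∑' j, ((-1 : ℝ) ^ (j + 1) * 2) * Tinv e₀ j := by
    simp [schurComplement, θ, lp.firstRow_apply, hLrow0, mul_comm]
  have hschur_eq : 1 - μ * ∑' j, ((-1 : ℝ) ^ (j + 1) * 2) * Tinv e₀ j = 1 + 2 * ξ * μ := by
    have hterm (j : ℕ) : (-1 : ℝ) ^ (j + 1) * 2 * Tinv e₀ j = -2 * ((-1) ^ j * Tinv e₀ j) := by
      ring
    simp_rw [hterm, tsum_mul_left, halt]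
    ring
  have hs : schurComplement 1 θ (μ • e₀) Tinv ≠ 0 := by
    rw [hschur, hschur_eq]; positivity
  have hcol : e.conjContinuousAlgEquiv (borderedInv 1 θ (μ • e₀) Tinv) e₀ =
      lp.cons (1 + 2 * ξ * μ)⁻¹ (-(μ / (1 + 2 * ξ * μ)) • Tinv e₀) := by
    rw [ContinuousLinearEquiv.conjContinuousAlgEquiv_apply_apply, lp.consEquiv_symm_single_zero,
      borderedInv_one_zero, hschur, hschur_eq, lp.consEquiv_apply, map_smul, smul_smul,
      div_eq_inv_mul, neg_mul]
  refine ⟨by rw [hschur_eq]; ring, e.conjContinuousAlgEquiv (borderedInv 1 θ (μ • e₀) Tinv),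
    ?_, ?_, ?_, fun i => ?_⟩
  · rw [hL, e.conjContinuousAlgEquiv_comp_eq_id (borderedInv_comp_bordered hTi1 hs)]
  · rw [hL, e.conjContinuousAlgEquiv_comp_eq_id (bordered_comp_borderedInv hTi2 hs)]
  · rw [hcol, lp.cons_apply_zero, one_div]
  · rw [hcol, lp.cons_apply_succ, lp.coeFn_smul, Pi.smul_apply, smul_eq_mul]

theorem stmt_15 (μ : ℝ) (hμ : 0 ≤ μ)
    (Tμ Tinv : lp (fun _ : ℕ => ℝ) 1 →L[ℝ] lp (fun _ : ℕ => ℝ) 1)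
    (hTent : ∀ i j : ℕ, (Tμ (lp.single 1 j 1)) i =
      if i = j then 2 * ((j : ℝ) + 1) else if i = j + 1 then μ else if j = i + 1 then -μ else 0)
    (hTi1 : Tinv.comp Tμ = ContinuousLinearMap.id ℝ _)
    (hTi2 : Tμ.comp Tinv = ContinuousLinearMap.id ℝ _)
    (ξ : ℝ)
    (hξ : ξ = ‖Tinv (lp.single 1 0 1)‖)
    (hξpos : 0 < ξ)
    (halt : ∑' i : ℕ, (-1 : ℝ) ^ i * (Tinv (lp.single 1 0 1)) i = ξ)
    (L : lp (fun _ : ℕ => ℝ) 1 →L[ℝ] lp (fun _ : ℕ => ℝ) 1)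
    (hL00 : (L (lp.single 1 0 1)) 0 = 1)
    (hLcol0 : ∀ i : ℕ, (L (lp.single 1 0 1)) (i + 1) = if i = 0 then μ else 0)
    (hLrow0 : ∀ j : ℕ, (L (lp.single 1 (j + 1) 1)) 0 = (-1 : ℝ) ^ (j + 1) * 2)
    (hLblock : ∀ i j : ℕ, (L (lp.single 1 (j + 1) 1)) (i + 1) = (Tμ (lp.single 1 j 1)) i) :
    (1 - μ * ∑' j : ℕ, ((-1 : ℝ) ^ (j + 1) * 2) * (Tinv (lp.single 1 0 1)) j = 1 + 2 * μ * ξ) ∧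
    ∃ Linv : lp (fun _ : ℕ => ℝ) 1 →L[ℝ] lp (fun _ : ℕ => ℝ) 1,
      Linv.comp L = ContinuousLinearMap.id ℝ _ ∧
      L.comp Linv = ContinuousLinearMap.id ℝ _ ∧
      (Linv (lp.single 1 0 1)) 0 = 1 / (1 + 2 * ξ * μ) ∧
      ∀ i : ℕ, (Linv (lp.single 1 0 1)) (i + 1) =
        -(μ / (1 + 2 * ξ * μ)) * (Tinv (lp.single 1 0 1)) i :=
  stmt_15_general μ hμ Tμ Tinv hTi1 hTi2 ξ hξpos halt L hL00 hLcol0 hLrow0 hLblock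
end

section
/- Let ν > 0, h₁ > 0, 0 < ε* < ν, γ₀ = 0.6383·√(h₁/(2ν)), γ₁ = 1/(2(ν−ε*)), and let B ≥ 0 (the norm ‖b‖₁ of initial vorticity data). If B ≤ (1/4)·min{1/γ₀, 1/(γ₁ e^{(−2ν+ε*)h₁})} and (1 − √(1−4Bγ₀)) + (1 − √((1 − 4Bγ₁e^{(−2ν+ε*)h₁})/(γ₁/γ₀ + 1))) < 1, then there exist σ₀, σ₁ > 0 such that B + γ₀σ₀² ≤ σ₀, B·e^{(−2ν+ε*)h₁} + γ₀σ₀² + γ₁σ₁² ≤ σ₁, and 2γ₀σ₀ + 2γ₁σ₁ < 1. -/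
/-! For `B > 0` the first two inequalities are solved with equality by the smaller roots of
`B + γ₀ σ² = σ` and `C + γ₁ σ² = σ`, where `C = B e + γ₀ σ₀²`; for such a root
`2 γ σ = 1 - √(1 - 4 γ c)`. With `k = γ₁ / γ₀` and `x = 2 γ₀ σ₀ = 1 - √(1 - 4 B γ₀)` one has
`1 - 4 γ₁ C = a - k x²` for `a = 1 - 4 B γ₁ e`, and the hypothesis `x < √(a / (k + 1))` gives
`a / (k + 1) ≤ a - k x²`, so `2 γ₁ σ₁` is at most the second summand of that hypothesis.
For `B = 0` the first root vanishes, and `σ₀ = σ₁ = 1 / (4 (γ₀ + γ₁))` works instead. -/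

open Real

noncomputable def smallRoot (γ c : ℝ) : ℝ := (1 - √(1 - 4 * γ * c)) / (2 * γ)

lemma two_mul_mul_smallRoot {γ : ℝ} (hγ : γ ≠ 0) (c : ℝ) :
    2 * γ * smallRoot γ c = 1 - √(1 - 4 * γ * c) := by
  unfold smallRoot
  field_simp

lemma add_mul_smallRoot_sq {γ c : ℝ} (hγ : γ ≠ 0) (hc : 4 * γ * c ≤ 1) :
    c + γ * smallRoot γ c ^ 2 = smallRoot γ c := by
  have hroot := two_mul_mul_smallRoot hγ c
  have hsq : √(1 - 4 * γ * c) ^ 2 = 1 - 4 * γ * c := sq_sqrt (by linarith)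
  refine mul_left_cancel₀ (mul_ne_zero four_ne_zero hγ) ?_
  linear_combination (2 * γ * smallRoot γ c - 1 - √(1 - 4 * γ * c)) * hroot + hsq

lemma smallRoot_pos {γ c : ℝ} (hγ : 0 < γ) (hc : 0 < c) : 0 < smallRoot γ c := by
  have : √(1 - 4 * γ * c) < 1 := by
    rw [sqrt_lt' one_pos]
    nlinarith
  exact div_pos (by linarith) (by positivity)

lemma div_add_one_le_sub_mul_sq {a k x : ℝ} (hk : 0 ≤ k) (hx : x ^ 2 ≤ a / (k + 1)) :
    a / (k + 1) ≤ a - k * x ^ 2 := by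
  have hk1 : k + 1 ≠ 0 := by positivity
  calc a / (k + 1) = a - k * (a / (k + 1)) := by field_simp; ring
    _ ≤ a - k * x ^ 2 := by gcongr

def Admissible (γ₀ γ₁ B e σ₀ σ₁ : ℝ) : Prop :=
  0 < σ₀ ∧ 0 < σ₁ ∧ B + γ₀ * σ₀ ^ 2 ≤ σ₀ ∧ B * e + γ₀ * σ₀ ^ 2 + γ₁ * σ₁ ^ 2 ≤ σ₁ ∧
    2 * γ₀ * σ₀ + 2 * γ₁ * σ₁ < 1

lemma admissible_zero {γ₀ γ₁ : ℝ} (hγ₀ : 0 < γ₀) (hγ₁ : 0 < γ₁) (e : ℝ) :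
    Admissible γ₀ γ₁ 0 e (1 / (4 * (γ₀ + γ₁))) (1 / (4 * (γ₀ + γ₁))) := by
  set σ := 1 / (4 * (γ₀ + γ₁)) with hσdef
  have hσ : 0 < σ := by positivity
  have hσγ : (γ₀ + γ₁) * σ = 1 / 4 := by rw [hσdef]; field_simp
  refine ⟨hσ, hσ, ?_, ?_, ?_⟩ <;> nlinarith [mul_pos hγ₁ hσ, mul_pos hγ₀ hσ]

lemma exists_admissible_of_pos {γ₀ γ₁ B e : ℝ} (hγ₀ : 0 < γ₀) (hγ₁ : 0 < γ₁) (he : 0 ≤ e)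
    (hB : 0 < B) (hB₀ : 4 * B * γ₀ ≤ 1) (hB₁ : 4 * B * γ₁ * e ≤ 1)
    (hsum : (1 - √(1 - 4 * B * γ₀)) + (1 - √((1 - 4 * B * γ₁ * e) / (γ₁ / γ₀ + 1))) < 1) :
    ∃ σ₀ σ₁, Admissible γ₀ γ₁ B e σ₀ σ₁ := by
  set σ₀ := smallRoot γ₀ B
  set C := B * e + γ₀ * σ₀ ^ 2 with hCdef
  set a := 1 - 4 * B * γ₁ * e with hadef
  set k := γ₁ / γ₀ with hkdef
  have hB₀' : 4 * γ₀ * B ≤ 1 := by linarith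
  have hσ₀ : 0 < σ₀ := smallRoot_pos hγ₀ hB
  have hx : 2 * γ₀ * σ₀ = 1 - √(1 - 4 * B * γ₀) := by
    rw [two_mul_mul_smallRoot hγ₀.ne', mul_right_comm]
  have hx2 : (2 * γ₀ * σ₀) ^ 2 ≤ a / (k + 1) := by
    rw [← sq_sqrt (div_nonneg (by linarith) (by positivity))]
    exact pow_le_pow_left₀ (by positivity) (by linarith) 2
  have hC : 1 - 4 * γ₁ * C = a - k * (2 * γ₀ * σ₀) ^ 2 := by
    rw [hCdef, hadef, hkdef]
    field_simp
    ring
  have hkey : a / (k + 1) ≤ 1 - 4 * γ₁ * C := hC ▸ div_add_one_le_sub_mul_sq (by positivity) hx2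
  have hC₁ : 4 * γ₁ * C ≤ 1 := by
    linarith [div_nonneg (show 0 ≤ a by linarith) (show 0 ≤ k + 1 by positivity)]
  refine ⟨σ₀, smallRoot γ₁ C, hσ₀, smallRoot_pos hγ₁ (by positivity),
    (add_mul_smallRoot_sq hγ₀.ne' hB₀').le, (add_mul_smallRoot_sq hγ₁.ne' hC₁).le, ?_⟩
  rw [hx, two_mul_mul_smallRoot hγ₁.ne']
  linarith [sqrt_le_sqrt hkey]

lemma exists_admissible {γ₀ γ₁ B e : ℝ} (hγ₀ : 0 < γ₀) (hγ₁ : 0 < γ₁) (he : 0 ≤ e)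
    (hB : 0 ≤ B) (hB₀ : 4 * B * γ₀ ≤ 1) (hB₁ : 4 * B * γ₁ * e ≤ 1)
    (hsum : (1 - √(1 - 4 * B * γ₀)) + (1 - √((1 - 4 * B * γ₁ * e) / (γ₁ / γ₀ + 1))) < 1) :
    ∃ σ₀ σ₁, Admissible γ₀ γ₁ B e σ₀ σ₁ := by
  rcases hB.eq_or_lt with rfl | hB
  · exact ⟨_, _, admissible_zero hγ₀ hγ₁ e⟩
  · exact exists_admissible_of_pos hγ₀ hγ₁ he hB hB₀ hB₁ hsum

lemma four_mul_mul_le_one_of_le_quarter_div {B γ : ℝ} (hγ : 0 < γ) (hB : B ≤ 1 / 4 * (1 / γ)) :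
    4 * B * γ ≤ 1 := by
  rw [mul_one_div, le_div_iff₀ hγ] at hB
  linarith

theorem stmt_17_general (ν h₁ εs γ₀ γ₁ B : ℝ)
    (hν : 0 < ν) (hh₁ : 0 < h₁) (hεsν : εs < ν)
    (hγ₀ : γ₀ = 0.6383 * Real.sqrt (h₁ / (2 * ν)))
    (hγ₁ : γ₁ = 1 / (2 * (ν - εs)))
    (hB : 0 ≤ B)
    (hB1 : B ≤ (1 / 4) * min (1 / γ₀) (1 / (γ₁ * Real.exp ((-2 * ν + εs) * h₁))))
    (hB2 : (1 - Real.sqrt (1 - 4 * B * γ₀)) +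
        (1 - Real.sqrt ((1 - 4 * B * γ₁ * Real.exp ((-2 * ν + εs) * h₁)) / (γ₁ / γ₀ + 1))) < 1) :
    ∃ σ₀ σ₁ : ℝ, 0 < σ₀ ∧ 0 < σ₁ ∧
      B + γ₀ * σ₀ ^ 2 ≤ σ₀ ∧
      B * Real.exp ((-2 * ν + εs) * h₁) + γ₀ * σ₀ ^ 2 + γ₁ * σ₁ ^ 2 ≤ σ₁ ∧
      2 * γ₀ * σ₀ + 2 * γ₁ * σ₁ < 1 := by
  set e := Real.exp ((-2 * ν + εs) * h₁)
  have hγ₀pos : 0 < γ₀ := hγ₀ ▸ by positivity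
  have hγ₁pos : 0 < γ₁ := hγ₁ ▸ div_pos one_pos (by linarith)
  have hB₀ : 4 * B * γ₀ ≤ 1 :=
    four_mul_mul_le_one_of_le_quarter_div hγ₀pos (hB1.trans (by gcongr; exact min_le_left _ _))
  have hB₁ : 4 * B * γ₁ * e ≤ 1 := by
    rw [mul_assoc]
    exact four_mul_mul_le_one_of_le_quarter_div (by positivity)
      (hB1.trans (by gcongr; exact min_le_right _ _))
  exact exists_admissible hγ₀pos hγ₁pos (exp_pos _).le hB hB₀ hB₁ hB2

theorem stmt_17 (ν h₁ εs γ₀ γ₁ B : ℝ)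
    (hν : 0 < ν) (hh₁ : 0 < h₁) (hεs : 0 < εs) (hεsν : εs < ν)
    (hγ₀ : γ₀ = 0.6383 * Real.sqrt (h₁ / (2 * ν)))
    (hγ₁ : γ₁ = 1 / (2 * (ν - εs)))
    (hB : 0 ≤ B)
    (hB1 : B ≤ (1 / 4) * min (1 / γ₀) (1 / (γ₁ * Real.exp ((-2 * ν + εs) * h₁))))
    (hB2 : (1 - Real.sqrt (1 - 4 * B * γ₀)) +
        (1 - Real.sqrt ((1 - 4 * B * γ₁ * Real.exp ((-2 * ν + εs) * h₁)) / (γ₁ / γ₀ + 1))) < 1) :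
    ∃ σ₀ σ₁ : ℝ, 0 < σ₀ ∧ 0 < σ₁ ∧
      B + γ₀ * σ₀ ^ 2 ≤ σ₀ ∧
      B * Real.exp ((-2 * ν + εs) * h₁) + γ₀ * σ₀ ^ 2 + γ₁ * σ₁ ^ 2 ≤ σ₁ ∧
      2 * γ₀ * σ₀ + 2 * γ₁ * σ₁ < 1 :=
  stmt_17_general ν h₁ εs γ₀ γ₁ B hν hh₁ hεsν hγ₀ hγ₁ hB hB1 hB2
end
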